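/- arXiv:1708.07464 — 6 statements merged into one kernel-verified Lean document; each statement's English description precedes it below -/
import Mathlib

section
/- For every integer d ≥ 0, each of the ℚ-vector spaces Z_q[d] and Z_q°[d] is closed under multiplication of formal power series; in particular Z_q = Z_q[0] and Z_q° = Z_q°[0] are ℚ-subalgebras of ℚ[[q]]. -/
/-- The q-analogue ζ_q(s_1,…,s_l;Q_1,…,Q_l) ∈ ℚ[[q]], defined coefficientwise:
the coefficient of q^m is the (convergent, since each summand with n_1 > m
contributes 0 once Q_1 has no constant term) sum over strictly decreasing tuples
n_1 > ⋯ > n_l > 0 of the coefficient of q^m in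
Q_1(q^{n_1})⋯Q_l(q^{n_l}) / ((1−q^{n_1})^{s_1}⋯(1−q^{n_l})^{s_l}). -/
noncomputable def zetaQ (l : ℕ) (s : Fin l → ℕ) (Q : Fin l → Polynomial ℚ) : PowerSeries ℚ :=
  PowerSeries.mk fun m =>
    ∑' n : {n : Fin l → ℕ // StrictAnti n ∧ ∀ i, 0 < n i},
      PowerSeries.coeff (R := ℚ) m
        (∏ j, Polynomial.aeval (PowerSeries.X ^ (n.1 j)) (Q j) *
          ((1 - PowerSeries.X ^ (n.1 j))⁻¹) ^ (s j))

/-- Z_q[d]: the ℚ-span of the ζ_q(s_1,…,s_l;Q_1,…,Q_l) with l ≥ 0, all s_j ≥ 1,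
deg Q_j ≤ s_j − d (i.e. Q_j = 0 or natDegree Q_j + d ≤ s_j) and Q_1 ∈ tℚ[t]. -/
noncomputable def ZqD (d : ℕ) : Submodule ℚ (PowerSeries ℚ) :=
  Submodule.span ℚ {f | ∃ (l : ℕ) (s : Fin l → ℕ) (Q : Fin l → Polynomial ℚ),
    (∀ j, 1 ≤ s j) ∧ (∀ j, Q j = 0 ∨ (Q j).natDegree + d ≤ s j) ∧
    (∀ h : 0 < l, (Q ⟨0, h⟩).coeff 0 = 0) ∧ f = zetaQ l s Q}

/-- Z_q°[d]: as Z_q[d], but with all Q_j ∈ tℚ[t]. -/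
noncomputable def ZqcD (d : ℕ) : Submodule ℚ (PowerSeries ℚ) :=
  Submodule.span ℚ {f | ∃ (l : ℕ) (s : Fin l → ℕ) (Q : Fin l → Polynomial ℚ),
    (∀ j, 1 ≤ s j) ∧ (∀ j, Q j = 0 ∨ (Q j).natDegree + d ≤ s j) ∧
    (∀ j, (Q j).coeff 0 = 0) ∧ f = zetaQ l s Q}

/-!
Write a generator as a word in letters `(s, Q)` and truncate its defining sum to
`N ≥ n₁ > ⋯ > n_l ≥ 1`. Splitting off the case `n₁ = N` and inducting on `N` shows that the
truncated sums of two words multiply according to the quasi-shuffle (stuffle) product of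
the words, in which coinciding indices merge letters as `(s, Q) · (s', Q') = (s + s', Q Q')`.
Because `Q₁(0) = 0`, a truncated sum agrees with the full series up to `q^N`, so the same
product formula holds for the series themselves. Merging letters preserves
`deg Q ≤ s - d` and `Q(0) = 0`, and every word of a quasi-shuffle begins with one of the
two first letters or with their merge, so the spanning sets are closed under products.
-/

namespace List

variable {α : Type*} (op : α → α → α)

def quasiShuffle : List α → List α → List (List α)
  | [], v => [v]
  | u, [] => [u]
  | a :: u, b :: v =>
      (quasiShuffle u (b :: v)).map (a :: ·) ++ (quasiShuffle (a :: u) v).map (b :: ·) ++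
        (quasiShuffle u v).map (op a b :: ·)
termination_by u v => u.length + v.length

@[simp] theorem quasiShuffle_nil_left (v : List α) : quasiShuffle op [] v = [v] := by
  rw [quasiShuffle]

@[simp] theorem quasiShuffle_nil_right (u : List α) : quasiShuffle op u [] = [u] := by
  cases u <;> simp [quasiShuffle]

theorem quasiShuffle_cons_cons (a b : α) (u v : List α) :
    quasiShuffle op (a :: u) (b :: v) =
      (quasiShuffle op u (b :: v)).map (a :: ·) ++ (quasiShuffle op (a :: u) v).map (b :: ·) ++
        (quasiShuffle op u v).map (op a b :: ·) := by
  rw [quasiShuffle]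

variable {op} {P : α → Prop}

theorem forall_mem_of_mem_quasiShuffle (hP : ∀ a b, P a → P b → P (op a b)) :
    ∀ {u v w : List α}, (∀ x ∈ u, P x) → (∀ x ∈ v, P x) → w ∈ quasiShuffle op u v →
      ∀ x ∈ w, P x
  | [], v, w, _, hv, hw => by simp_all
  | a :: u, [], w, hu, _, hw => by simp_all
  | a :: u, b :: v, w, hu, hv, hw => by
    simp only [forall_mem_cons] at hu hv
    simp only [quasiShuffle_cons_cons, mem_append, mem_map] at hw
    rcases hw with (⟨w, hw, rfl⟩ | ⟨w, hw, rfl⟩) | ⟨w, hw, rfl⟩ <;> rw [forall_mem_cons]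
    · exact ⟨hu.1, forall_mem_of_mem_quasiShuffle hP hu.2 (forall_mem_cons.2 hv) hw⟩
    · exact ⟨hv.1, forall_mem_of_mem_quasiShuffle hP (forall_mem_cons.2 hu) hv.2 hw⟩
    · exact ⟨hP a b hu.1 hv.1, forall_mem_of_mem_quasiShuffle hP hu.2 hv.2 hw⟩
termination_by u v => u.length + v.length

theorem forall_mem_head?_of_mem_quasiShuffle (hP : ∀ a b, P a → P b → P (op a b))
    {u v w : List α} (hu : ∀ x ∈ u.head?, P x) (hv : ∀ x ∈ v.head?, P x)
    (hw : w ∈ quasiShuffle op u v) : ∀ x ∈ w.head?, P x := by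
  match u, v with
  | [], v => simp_all
  | a :: u, [] => simp_all
  | a :: u, b :: v =>
    simp only [head?_cons, Option.mem_def, Option.some.injEq, forall_eq'] at hu hv
    simp only [quasiShuffle_cons_cons, mem_append, mem_map] at hw
    rcases hw with (⟨w, -, rfl⟩ | ⟨w, -, rfl⟩) | ⟨w, -, rfl⟩ <;> simp [*]

theorem forall_mem_head?_iff {w : List α} :
    (∀ x ∈ w.head?, P x) ↔ ∀ h : 0 < w.length, P w[0] := by
  cases w <;> simp

end List

section IteratedSum

variable {α R : Type*} [CommSemiring R] (ev : α → ℕ → R)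

/-- `iteratedSum ev N [a₁, …, a_l] = ∑_{N ≥ n₁ > ⋯ > n_l ≥ 1} ev a₁ n₁ ⋯ ev a_l n_l`. -/
def iteratedSum : ℕ → List α → R
  | _, [] => 1
  | 0, _ :: _ => 0
  | N + 1, a :: w => iteratedSum N (a :: w) + ev a (N + 1) * iteratedSum N w

@[simp] theorem iteratedSum_nil (N : ℕ) : iteratedSum ev N [] = 1 := by
  cases N <;> rfl

theorem iteratedSum_mul {op : α → α → α} (hev : ∀ a b k, ev (op a b) k = ev a k * ev b k)
    (N : ℕ) (u v : List α) :
    iteratedSum ev N u * iteratedSum ev N v =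
      ((u.quasiShuffle op v).map (iteratedSum ev N)).sum := by
  induction N generalizing u v with
  | zero =>
    match u, v with
    | [], v => simp
    | a :: u, [] => simp
    | a :: u, b :: v => simp [List.quasiShuffle_cons_cons, Function.comp_def, iteratedSum]
  | succ N ih =>
    match u, v with
    | [], v => simp
    | a :: u, [] => simp
    | a :: u, b :: v =>
      have h := ih (a :: u) (b :: v)
      simp only [List.quasiShuffle_cons_cons, List.map_append, List.map_map, Function.comp_def,
        List.sum_append] at h ⊢
      simp only [iteratedSum, hev, List.sum_map_add, mul_assoc, List.sum_map_mul_left, ← ih]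
      rw [add_mul, mul_add, h]
      ring

end IteratedSum

open Finset

theorem Fin.strictAnti_cons {α : Type*} [Preorder α] {n : ℕ} {f : Fin n → α} {a : α} :
    StrictAnti (Fin.cons a f : Fin (n + 1) → α) ↔ (∀ j, f j < a) ∧ StrictAnti f :=
  Fin.strictMono_cons (α := αᵒᵈ)

open Classical in
def strictAntiBox (l N : ℕ) : Finset (Fin l → ℕ) :=
  {n ∈ Fintype.piFinset fun _ => Icc 1 N | StrictAnti n}

theorem mem_strictAntiBox {l N : ℕ} {n : Fin l → ℕ} :
    n ∈ strictAntiBox l N ↔ StrictAnti n ∧ ∀ i, 1 ≤ n i ∧ n i ≤ N := by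
  simp [strictAntiBox, and_comm]

theorem strictAntiBox_zero_left (N : ℕ) : strictAntiBox 0 N = {Fin.elim0} := by
  ext n
  simp [mem_strictAntiBox, Subsingleton.elim n Fin.elim0, Subsingleton.strictAnti]

theorem strictAntiBox_zero_right (l : ℕ) : strictAntiBox (l + 1) 0 = ∅ := by
  ext n
  simp only [mem_strictAntiBox, notMem_empty, iff_false, not_and, not_forall]
  exact fun _ => ⟨0, by omega⟩

theorem filter_strictAntiBox_succ_le (l N : ℕ) :
    {n ∈ strictAntiBox (l + 1) (N + 1) | n 0 ≤ N} = strictAntiBox (l + 1) N := by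
  ext n
  simp only [mem_filter, mem_strictAntiBox]
  constructor
  · rintro ⟨⟨hn, hbd⟩, h0⟩
    exact ⟨hn, fun i => ⟨(hbd i).1, (hn.antitone (Fin.zero_le i)).trans h0⟩⟩
  · rintro ⟨hn, hbd⟩
    exact ⟨⟨hn, fun i => ⟨(hbd i).1, (hbd i).2.trans N.le_succ⟩⟩, (hbd 0).2⟩

theorem sum_strictAntiBox_succ {M : Type*} [AddCommMonoid M] (l N : ℕ)
    (g : (Fin (l + 1) → ℕ) → M) :
    ∑ n ∈ strictAntiBox (l + 1) (N + 1), g n =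
      ∑ n ∈ strictAntiBox (l + 1) N, g n + ∑ n ∈ strictAntiBox l N, g (Fin.cons (N + 1) n) := by
  rw [← sum_filter_add_sum_filter_not _ (fun n => n 0 ≤ N), filter_strictAntiBox_succ_le]
  congr 1
  have hcons : ∀ n ∈ {n ∈ strictAntiBox (l + 1) (N + 1) | ¬n 0 ≤ N},
      Fin.cons (N + 1) (Fin.tail n) = n := by
    intro n hn
    simp only [mem_filter, mem_strictAntiBox, not_le] at hn
    rw [← le_antisymm (hn.1.2 0).2 hn.2, Fin.cons_self_tail]
  refine sum_nbij' Fin.tail (fun n => Fin.cons (N + 1) n) ?_ ?_ hcons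
    (fun n _ => Fin.tail_cons _ _) (fun n hn => by rw [hcons n hn])
  · intro n hn
    simp only [mem_filter, mem_strictAntiBox, not_le] at hn
    obtain ⟨⟨hn, hbd⟩, h0⟩ := hn
    refine mem_strictAntiBox.2 ⟨hn.comp_strictMono Fin.strictMono_succ, fun i => ?_⟩
    have := hn (Fin.succ_pos i)
    have := (hbd 0).2
    exact ⟨(hbd i.succ).1, by simp only [Fin.tail]; omega⟩
  · intro n hn
    obtain ⟨hn, hbd⟩ := mem_strictAntiBox.1 hn
    simp only [mem_filter, mem_strictAntiBox, Fin.cons_zero, not_le,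
      Fin.strictAnti_cons, Fin.forall_fin_succ, Fin.cons_succ]
    exact ⟨⟨⟨fun j => Nat.lt_succ_of_le (hbd j).2, hn⟩, ⟨by omega, le_rfl⟩,
      fun i => ⟨(hbd i).1, (hbd i).2.trans N.le_succ⟩⟩, N.lt_succ_self⟩

theorem iteratedSum_ofFn {α R : Type*} [CommSemiring R] (ev : α → ℕ → R) (N : ℕ) {l : ℕ}
    (f : Fin l → α) :
    iteratedSum ev N (List.ofFn f) = ∑ n ∈ strictAntiBox l N, ∏ j, ev (f j) (n j) := by
  induction N generalizing l with
  | zero =>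
    cases l with
    | zero => simp [strictAntiBox_zero_left]
    | succ l => simp [List.ofFn_succ, strictAntiBox_zero_right, iteratedSum]
  | succ N ih =>
    cases l with
    | zero => simp [strictAntiBox_zero_left]
    | succ l =>
      rw [sum_strictAntiBox_succ, List.ofFn_succ, iteratedSum, ← List.ofFn_succ, ih, ih,
        mul_sum]
      simp only [Fin.prod_univ_succ, Fin.cons_zero, Fin.cons_succ]

open PowerSeries
open scoped Polynomial

noncomputable def letter (a : ℕ × ℚ[X]) (k : ℕ) : ℚ⟦X⟧ :=
  Polynomial.aeval (X ^ k) a.2 * ((1 - X ^ k)⁻¹) ^ a.1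

noncomputable def letterMul (a b : ℕ × ℚ[X]) : ℕ × ℚ[X] := (a.1 + b.1, a.2 * b.2)

theorem letter_letterMul (a b : ℕ × ℚ[X]) (k : ℕ) :
    letter (letterMul a b) k = letter a k * letter b k := by
  simp only [letter, letterMul, map_mul, pow_add]
  ring

theorem coeff_zero_letterMul {a : ℕ × ℚ[X]} (ha : a.2.coeff 0 = 0) (b : ℕ × ℚ[X]) :
    (letterMul a b).2.coeff 0 = 0 := by
  simp [letterMul, Polynomial.mul_coeff_zero, ha]

theorem X_pow_dvd_letter {a : ℕ × ℚ[X]} (ha : a.2.coeff 0 = 0) (k : ℕ) :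
    (X : ℚ⟦X⟧) ^ k ∣ letter a k := by
  obtain ⟨R, hR⟩ := Polynomial.X_dvd_iff.2 ha
  rw [letter, hR, map_mul, Polynomial.aeval_X, mul_assoc]
  exact dvd_mul_right _ _

theorem coeff_zetaQ {l : ℕ} (s : Fin l → ℕ) {Q : Fin l → ℚ[X]}
    (hQ : ∀ h : 0 < l, (Q ⟨0, h⟩).coeff 0 = 0) {m N : ℕ} (hmN : m ≤ N) :
    coeff m (zetaQ l s Q) = coeff m (iteratedSum letter N (List.ofFn fun j => (s j, Q j))) := by
  classical
  rw [iteratedSum_ofFn, map_sum, zetaQ, coeff_mk]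
  set P : (Fin l → ℕ) → Prop := fun n => StrictAnti n ∧ ∀ i, 0 < n i
  change ∑' n : {n // P n}, coeff m (∏ j, letter (s j, Q j) (n.1 j)) = _
  have hbox : ∀ n ∈ strictAntiBox l N, P n := fun n hn =>
    ⟨(mem_strictAntiBox.1 hn).1, fun i => ((mem_strictAntiBox.1 hn).2 i).1⟩
  rw [tsum_eq_sum (s := (strictAntiBox l N).subtype P),
    sum_subtype_eq_sum_filter fun n : Fin l → ℕ => coeff m (∏ j, letter (s j, Q j) (n j)),
    filter_true_of_mem hbox]
  rintro ⟨n, hn, hpos⟩ hout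
  obtain ⟨i, hi⟩ : ∃ i, N < n i := by
    by_contra! h
    exact hout (mem_subtype.2 (mem_strictAntiBox.2 ⟨hn, fun i => ⟨hpos i, h i⟩⟩))
  have h0 : N < n ⟨0, i.pos⟩ :=
    hi.trans_le (hn.antitone (show (⟨0, i.pos⟩ : Fin l) ≤ i from Nat.zero_le _))
  refine X_pow_dvd_iff.1 ?_ m (hmN.trans_lt h0)
  exact (X_pow_dvd_letter (a := (s _, Q _)) (hQ i.pos) _).trans (dvd_prod_of_mem _ (mem_univ _))

noncomputable def zetaWord (w : List (ℕ × ℚ[X])) : ℚ⟦X⟧ :=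
  zetaQ w.length (fun j => w[j].1) (fun j => w[j].2)

theorem zetaWord_ofFn {l : ℕ} (f : Fin l → ℕ × ℚ[X]) :
    zetaWord (List.ofFn f) = zetaQ l (fun j => (f j).1) (fun j => (f j).2) := by
  have key : ∀ l' (h : l' = l), zetaQ l' (fun j => (f (j.cast h)).1) (fun j => (f (j.cast h)).2) =
      zetaQ l (fun j => (f j).1) (fun j => (f j).2) := by
    rintro _ rfl
    rfl
  simp only [zetaWord, Fin.getElem_fin, List.getElem_ofFn]
  exact key _ List.length_ofFn

theorem coeff_zetaWord {w : List (ℕ × ℚ[X])} (hw : ∀ a ∈ w.head?, a.2.coeff 0 = 0) {m N : ℕ}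
    (hmN : m ≤ N) : coeff m (zetaWord w) = coeff m (iteratedSum letter N w) := by
  rw [zetaWord, coeff_zetaQ _ (List.forall_mem_head?_iff.1 hw) hmN]
  simp only [Prod.mk.eta, Fin.getElem_fin, List.ofFn_getElem]

theorem zetaWord_nil : zetaWord [] = 1 := by
  ext m
  rw [coeff_zetaWord (by simp) le_rfl, iteratedSum_nil]

theorem zetaWord_mul {u v : List (ℕ × ℚ[X])} (hu : ∀ a ∈ u.head?, a.2.coeff 0 = 0)
    (hv : ∀ a ∈ v.head?, a.2.coeff 0 = 0) :
    zetaWord u * zetaWord v = ((u.quasiShuffle letterMul v).map zetaWord).sum := by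
  ext m
  calc coeff m (zetaWord u * zetaWord v)
      = coeff m (iteratedSum letter m u * iteratedSum letter m v) := by
        simp only [coeff_mul]
        refine sum_congr rfl fun p hp => ?_
        rw [coeff_zetaWord hu (HasAntidiagonal.antidiagonal.fst_le hp),
          coeff_zetaWord hv (HasAntidiagonal.antidiagonal.snd_le hp)]
    _ = coeff m ((u.quasiShuffle letterMul v).map zetaWord).sum := by
        rw [iteratedSum_mul letter letter_letterMul, map_list_sum, map_list_sum, List.map_map,
          List.map_map]
        refine congrArg List.sum (List.map_congr_left fun w hw => ?_)
        have hw0 := List.forall_mem_head?_of_mem_quasiShuffle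
          (fun a b ha _ => coeff_zero_letterMul ha b) hu hv hw
        exact (coeff_zetaWord hw0 le_rfl).symm

theorem Submodule.mul_mem_span_of_mul_mem {R A : Type*} [CommSemiring R] [Semiring A]
    [Algebra R A] {S : Set A} (hS : ∀ x ∈ S, ∀ y ∈ S, x * y ∈ span R S) {f g : A}
    (hf : f ∈ span R S) (hg : g ∈ span R S) : f * g ∈ span R S := by
  have hle : span R S * span R S ≤ span R S := by
    rw [span_mul_span, span_le]
    rintro _ ⟨x, hx, y, hy, rfl⟩
    exact hS x hx y hy
  exact hle (mul_mem_mul hf hg)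

noncomputable def zetaWordSpan (P H : ℕ × ℚ[X] → Prop) : Submodule ℚ ℚ⟦X⟧ :=
  Submodule.span ℚ (zetaWord '' {w | (∀ a ∈ w, P a) ∧ ∀ a ∈ w.head?, H a})

section zetaWordSpan

variable {P H : ℕ × ℚ[X] → Prop}

theorem one_mem_zetaWordSpan : 1 ∈ zetaWordSpan P H :=
  Submodule.subset_span ⟨[], by simp, zetaWord_nil⟩

theorem mul_mem_zetaWordSpan (hP : ∀ a b, P a → P b → P (letterMul a b))
    (hH : ∀ a b, H a → H b → H (letterMul a b)) (hH0 : ∀ a, H a → a.2.coeff 0 = 0)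
    {f g : ℚ⟦X⟧} (hf : f ∈ zetaWordSpan P H) (hg : g ∈ zetaWordSpan P H) :
    f * g ∈ zetaWordSpan P H := by
  refine Submodule.mul_mem_span_of_mul_mem ?_ hf hg
  rintro _ ⟨u, ⟨huP, huH⟩, rfl⟩ _ ⟨v, ⟨hvP, hvH⟩, rfl⟩
  rw [zetaWord_mul (fun a ha => hH0 a (huH a ha)) (fun a ha => hH0 a (hvH a ha))]
  refine list_sum_mem fun _ hf => ?_
  obtain ⟨w, hw, rfl⟩ := List.mem_map.1 hf
  exact Submodule.subset_span ⟨w, ⟨List.forall_mem_of_mem_quasiShuffle hP huP hvP hw,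
    List.forall_mem_head?_of_mem_quasiShuffle hH huH hvH hw⟩, rfl⟩

end zetaWordSpan

def LetterAdmissible (d : ℕ) (a : ℕ × ℚ[X]) : Prop :=
  1 ≤ a.1 ∧ (a.2 = 0 ∨ a.2.natDegree + d ≤ a.1)

theorem LetterAdmissible.letterMul {d : ℕ} {a b : ℕ × ℚ[X]} (ha : LetterAdmissible d a)
    (hb : LetterAdmissible d b) : LetterAdmissible d (letterMul a b) := by
  refine ⟨by simp only [_root_.letterMul]; linarith [ha.1, hb.1], ?_⟩
  by_cases h : a.2 = 0 ∨ b.2 = 0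
  · left
    rcases h with h | h <;> simp [_root_.letterMul, h]
  · push Not at h
    right
    have := ha.2.resolve_left h.1
    have := hb.2.resolve_left h.2
    simp only [_root_.letterMul, Polynomial.natDegree_mul h.1 h.2]
    omega

theorem ZqD_eq_zetaWordSpan (d : ℕ) :
    ZqD d = zetaWordSpan (LetterAdmissible d) (·.2.coeff 0 = 0) := by
  refine congrArg _ (Set.ext fun f => ⟨?_, ?_⟩)
  · rintro ⟨l, s, Q, hs, hdeg, hQ, rfl⟩
    refine ⟨List.ofFn fun j => (s j, Q j), ⟨?_, ?_⟩, zetaWord_ofFn _⟩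
    · exact List.forall_mem_ofFn_iff.2 fun j => ⟨hs j, hdeg j⟩
    · exact List.forall_mem_head?_iff.2 fun h => by simpa using hQ (by simpa using h)
  · rintro ⟨w, ⟨hw, hH⟩, rfl⟩
    exact ⟨w.length, _, _, fun j => (hw _ (List.getElem_mem _)).1,
      fun j => (hw _ (List.getElem_mem _)).2, List.forall_mem_head?_iff.1 hH, rfl⟩

theorem ZqcD_eq_zetaWordSpan (d : ℕ) :
    ZqcD d = zetaWordSpan (fun a => LetterAdmissible d a ∧ a.2.coeff 0 = 0) (·.2.coeff 0 = 0) := by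
  refine congrArg _ (Set.ext fun f => ⟨?_, ?_⟩)
  · rintro ⟨l, s, Q, hs, hdeg, hQ, rfl⟩
    refine ⟨List.ofFn fun j => (s j, Q j), ⟨?_, ?_⟩, zetaWord_ofFn _⟩
    · exact List.forall_mem_ofFn_iff.2 fun j => ⟨⟨hs j, hdeg j⟩, hQ j⟩
    · exact List.forall_mem_head?_iff.2 fun h => by simpa using hQ ⟨0, by simpa using h⟩
  · rintro ⟨w, ⟨hw, -⟩, rfl⟩
    exact ⟨w.length, _, _, fun j => (hw _ (List.getElem_mem _)).1.1,
      fun j => (hw _ (List.getElem_mem _)).1.2, fun j => (hw _ (List.getElem_mem _)).2, rfl⟩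

/-- For every d ≥ 0 the spaces Z_q[d] and Z_q°[d] are closed under multiplication and
contain 1; in particular Z_q = Z_q[0] and Z_q° = Z_q°[0] are ℚ-subalgebras of ℚ[[q]]. -/
theorem ZqD_ZqcD_mul_closed :
    (∀ d : ℕ, ∀ f g : PowerSeries ℚ, f ∈ ZqD d → g ∈ ZqD d → f * g ∈ ZqD d) ∧
    (∀ d : ℕ, ∀ f g : PowerSeries ℚ, f ∈ ZqcD d → g ∈ ZqcD d → f * g ∈ ZqcD d) ∧
    (∀ d : ℕ, (1 : PowerSeries ℚ) ∈ ZqD d ∧ (1 : PowerSeries ℚ) ∈ ZqcD d) := by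
  have hcoeff : ∀ a b : ℕ × ℚ[X], a.2.coeff 0 = 0 → b.2.coeff 0 = 0 →
      (letterMul a b).2.coeff 0 = 0 := fun a b ha _ => coeff_zero_letterMul ha b
  refine ⟨fun d f g => ?_, fun d f g => ?_, fun d => ?_⟩
  · rw [ZqD_eq_zetaWordSpan]
    exact mul_mem_zetaWordSpan (fun _ _ => LetterAdmissible.letterMul) hcoeff fun _ => id
  · rw [ZqcD_eq_zetaWordSpan]
    exact mul_mem_zetaWordSpan (fun a b ha hb => ⟨ha.1.letterMul hb.1, hcoeff a b ha.2 hb.2⟩)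
      hcoeff fun _ => id
  · rw [ZqD_eq_zetaWordSpan, ZqcD_eq_zetaWordSpan]
    exact ⟨one_mem_zetaWordSpan, one_mem_zetaWordSpan⟩
end

section
/- Let l ≥ 1, s_1 ≥ 2, s_2,…,s_l ≥ 1 be integers and let Q_1 ∈ tℝ[t], Q_2,…,Q_l ∈ ℝ[t] be polynomials. For real q with 0 < q < 1 the series F(q) = Σ_{n_1>⋯>n_l>0} Q_1(q^{n_1})⋯Q_l(q^{n_l}) / ((1−q^{n_1})^{s_1}⋯(1−q^{n_l})^{s_l}) converges, and as q → 1 from below one has (1−q)^{s_1+⋯+s_l} · F(q) → Q_1(1)⋯Q_l(1) · ζ(s_1,…,s_l), where ζ(s_1,…,s_l) = Σ_{n_1>⋯>n_l>0} 1/(n_1^{s_1}⋯n_l^{s_l}) is the multiple zeta value. -/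
/-!
After multiplication by `(1 - q) ^ (s₁ + ⋯ + sₗ)` the term of index `n` becomes
`∏ Qⱼ(q ^ nⱼ) * ((1 - q) / (1 - q ^ nⱼ)) ^ sⱼ`, and `(1 - q) / (1 - q ^ m) → 1 / m` as `q → 1`,
so the limit is an instance of dominated convergence. With `N = n₁` the largest index,
`(1 - q) / (1 - q ^ m) ≤ (1 - log q ^ N) / m`; the factor `q ^ N` that `Q₁(0) = 0` provides absorbs
the resulting `(1 - log q ^ N) ^ (s₁ + ⋯ + sₗ)`, because `x (1 - log x) ^ S` is bounded on `(0, 1]`.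
The dominating series is a multiple of `ζ(s₁, …, sₗ)`, which converges because
`∏ nⱼ ^ sⱼ ≥ n₁ ∏ nⱼ ≥ ∏ nⱼ ^ (1 + 1 / l)`.
-/

open Filter Topology Finset Polynomial

theorem summable_prod_comp_fin {α : Type*} {f : α → ℝ} (hf₀ : ∀ a, 0 ≤ f a) (hf : Summable f) :
    ∀ l : ℕ, Summable fun n : Fin l → α => ∏ j, f (n j)
  | 0 => Summable.of_finite
  | l + 1 => by
    have h := hf.mul_of_nonneg (summable_prod_comp_fin hf₀ hf l) (fun _ => hf₀ _)
      fun n => prod_nonneg fun j _ => hf₀ _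
    refine (h.comp_injective (Fin.consEquiv fun _ : Fin (l + 1) => α).symm.injective).congr
      fun n => ?_
    simp [Fin.consEquiv, Fin.prod_univ_succ, Fin.tail]

theorem prod_rpow_one_add_inv_card_le_prod_pow {ι : Type*} [Fintype ι] {x : ι → ℝ} {s : ι → ℕ}
    {j₀ : ι} (hx : ∀ j, 1 ≤ x j) (hx₀ : ∀ j, x j ≤ x j₀) (hs₀ : 2 ≤ s j₀) (hs : ∀ j, 1 ≤ s j) :
    ∏ j, x j ^ (1 + (Fintype.card ι : ℝ)⁻¹) ≤ ∏ j, x j ^ s j := by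
  have hx0 : ∀ j, 0 ≤ x j := fun j => zero_le_one.trans (hx j)
  have : Nonempty ι := ⟨j₀⟩
  have hcard : Fintype.card ι ≠ 0 := Fintype.card_ne_zero
  have hroot : ∏ j, x j ^ (Fintype.card ι : ℝ)⁻¹ ≤ x j₀ :=
    calc ∏ j, x j ^ (Fintype.card ι : ℝ)⁻¹ ≤ ∏ _j : ι, x j₀ ^ (Fintype.card ι : ℝ)⁻¹ :=
          prod_le_prod (fun j _ => Real.rpow_nonneg (hx0 j) _)
            fun j _ => Real.rpow_le_rpow (hx0 j) (hx₀ j) (by positivity)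
      _ = x j₀ := by rw [prod_const, card_univ, Real.rpow_inv_natCast_pow (hx0 j₀) hcard]
  have hextra : x j₀ ≤ ∏ j, x j ^ (s j - 1) :=
    calc x j₀ ≤ x j₀ ^ (s j₀ - 1) := le_self_pow₀ (hx j₀) (by omega)
      _ = ∏ j ∈ {j₀}, x j ^ (s j - 1) := (prod_singleton _ _).symm
      _ ≤ ∏ j, x j ^ (s j - 1) := prod_le_prod_of_subset_of_one_le (subset_univ _)
          (fun j _ => pow_nonneg (hx0 j) _) fun j _ _ => one_le_pow₀ (hx j)
  calc ∏ j, x j ^ (1 + (Fintype.card ι : ℝ)⁻¹)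
      = (∏ j, x j) * ∏ j, x j ^ (Fintype.card ι : ℝ)⁻¹ := by
        rw [← prod_mul_distrib]
        exact prod_congr rfl fun j _ => by
          rw [Real.rpow_add' (hx0 j) (by positivity), Real.rpow_one]
    _ ≤ (∏ j, x j) * ∏ j, x j ^ (s j - 1) :=
        mul_le_mul_of_nonneg_left (hroot.trans hextra) (prod_nonneg fun j _ => hx0 j)
    _ = ∏ j, x j ^ s j := by
        rw [← prod_mul_distrib]
        exact prod_congr rfl fun j _ => mul_pow_sub_one (by have := hs j; omega) _

theorem summable_multipleZeta {l : ℕ} (hl : 0 < l) {s : Fin l → ℕ} (hs₀ : 2 ≤ s ⟨0, hl⟩)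
    (hs : ∀ j, 1 ≤ s j) :
    Summable fun n : {n : Fin l → ℕ // StrictAnti n ∧ ∀ i, 0 < n i} =>
      ∏ j, 1 / (n.1 j : ℝ) ^ s j := by
  set p : ℝ := 1 + (Fintype.card (Fin l) : ℝ)⁻¹
  have hmaj : Summable fun n : Fin l → ℕ => ∏ j, ((n j : ℝ) ^ p)⁻¹ :=
    summable_prod_comp_fin (fun _ => by positivity)
      (Real.summable_nat_rpow_inv.2 (by simp [p, hl])) l
  refine (hmaj.subtype _).of_nonneg_of_le (fun n => by positivity) fun ⟨n, hanti, hpos⟩ => ?_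
  have hn : ∀ j, (1 : ℝ) ≤ n j := fun j => by exact_mod_cast hpos j
  simp only [Function.comp_apply, one_div, prod_inv_distrib]
  exact inv_anti₀ (prod_pos fun j _ => Real.rpow_pos_of_pos (by linarith [hn j]) _) <|
    prod_rpow_one_add_inv_card_le_prod_pow hn
      (fun j => by exact_mod_cast hanti.antitone (Fin.le_iff_val_le_val.2 (Nat.zero_le _)))
      hs₀ hs

theorem one_sub_div_one_sub_pow_le {q : ℝ} (hq₀ : 0 < q) (hq₁ : q < 1) {m : ℕ} (hm : 0 < m) :
    (1 - q) / (1 - q ^ m) ≤ (1 - Real.log (q ^ m)) / m := by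
  have hx₀ : 0 < q ^ m := pow_pos hq₀ m
  have hx₁ : q ^ m < 1 := pow_lt_one₀ hq₀.le hq₁ hm.ne'
  have hq : 1 - q ≤ -Real.log q := by linarith [Real.log_le_sub_one_of_pos hq₀]
  have hx : q ^ m * (1 - Real.log (q ^ m)) ≤ 1 :=
    calc q ^ m * (1 - Real.log (q ^ m)) ≤ q ^ m * (q ^ m)⁻¹ := by
          gcongr
          linarith [Real.log_inv (q ^ m) ▸ Real.log_le_sub_one_of_pos (inv_pos.2 hx₀)]
      _ = 1 := mul_inv_cancel₀ hx₀.ne'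
  rw [div_le_div_iff₀ (by linarith) (by exact_mod_cast hm)]
  rw [Real.log_pow] at hx ⊢
  -- `(1 - log x) (1 - x) ≥ -log x = -m log q ≥ m (1 - q)` for `x = q ^ m`, by `hx` and `hq`
  nlinarith [mul_le_mul_of_nonneg_left hq (Nat.cast_nonneg (α := ℝ) m)]

theorem mul_one_sub_log_pow_le {x : ℝ} (hx₀ : 0 < x) (hx₁ : x ≤ 1) (S : ℕ) :
    x * (1 - Real.log x) ^ S ≤ S.factorial * Real.exp 1 := by
  have hL : 0 ≤ 1 - Real.log x := by linarith [Real.log_nonpos hx₀.le hx₁]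
  have h := Real.pow_div_factorial_le_exp _ hL S
  rw [div_le_iff₀ (by positivity), Real.exp_sub, Real.exp_log hx₀] at h
  calc x * (1 - Real.log x) ^ S ≤ x * (Real.exp 1 / x * S.factorial) :=
        mul_le_mul_of_nonneg_left h hx₀.le
    _ = S.factorial * Real.exp 1 := by field_simp

theorem tendsto_one_sub_div_one_sub_pow {m : ℕ} (hm : 0 < m) :
    Tendsto (fun q : ℝ => (1 - q) / (1 - q ^ m)) (𝓝[≠] 1) (𝓝 (m : ℝ)⁻¹) := by
  have hgeom : Tendsto (fun q : ℝ => (∑ i ∈ range m, q ^ i)⁻¹) (𝓝 1) (𝓝 (m : ℝ)⁻¹) := by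
    have : Continuous fun q : ℝ => ∑ i ∈ range m, q ^ i := by fun_prop
    simpa using (this.tendsto 1).inv₀ (by simp [hm.ne'])
  refine (hgeom.mono_left nhdsWithin_le_nhds).congr' (eventually_nhdsWithin_of_forall fun q hq => ?_)
  have hq : 1 - q ≠ 0 := sub_ne_zero.2 (Ne.symm hq)
  dsimp only
  rw [← mul_neg_geom_sum, div_mul_cancel_left₀ hq]

theorem tendsto_eval_pow_mul_one_sub_div_one_sub_pow (P : ℝ[X]) {m : ℕ} (hm : 0 < m) (k : ℕ) :
    Tendsto (fun q : ℝ => P.eval (q ^ m) * ((1 - q) / (1 - q ^ m)) ^ k) (𝓝[≠] 1)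
      (𝓝 (P.eval 1 / (m : ℝ) ^ k)) := by
  have hP : Tendsto (fun q : ℝ => P.eval (q ^ m)) (𝓝[≠] 1) (𝓝 (P.eval 1)) :=
    ((by fun_prop : Continuous fun q : ℝ => P.eval (q ^ m)).tendsto' 1 _ (by simp)).mono_left
      nhdsWithin_le_nhds
  simpa [div_eq_mul_inv] using hP.mul ((tendsto_one_sub_div_one_sub_pow hm).pow k)

theorem Polynomial.exists_abs_eval_le (P : ℝ[X]) :
    ∃ B, 0 ≤ B ∧ ∀ x ∈ Set.Icc (0 : ℝ) 1, |P.eval x| ≤ B := by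
  obtain ⟨B, hB⟩ := isCompact_Icc.exists_bound_of_continuousOn P.continuous.continuousOn
  exact ⟨B, (norm_nonneg _).trans (hB 0 ⟨le_rfl, zero_le_one⟩), hB⟩

theorem Polynomial.exists_abs_eval_le_mul {P : ℝ[X]} (hP : P.coeff 0 = 0) :
    ∃ B, 0 ≤ B ∧ ∀ x ∈ Set.Icc (0 : ℝ) 1, |P.eval x| ≤ B * x := by
  obtain ⟨B, hB₀, hB⟩ := P.divX.exists_abs_eval_le
  refine ⟨B, hB₀, fun x hx => ?_⟩
  have hXP : X * P.divX = P := by simpa [hP] using X_mul_divX_add P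
  rw [← hXP, eval_mul, eval_X, abs_mul, abs_of_nonneg hx.1, mul_comm]
  exact mul_le_mul_of_nonneg_right (hB x hx) hx.1

theorem Polynomial.exists_prod_abs_eval_pow_le {ι : Type*} [Fintype ι] {j₀ : ι} (Q : ι → ℝ[X])
    (hQ : (Q j₀).coeff 0 = 0) :
    ∃ C, 0 ≤ C ∧ ∀ q ∈ Set.Icc (0 : ℝ) 1, ∀ n : ι → ℕ,
      ∏ j, |(Q j).eval (q ^ n j)| ≤ C * q ^ n j₀ := by
  classical
  obtain ⟨B₀, hB₀, hQ₀⟩ := exists_abs_eval_le_mul hQ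
  choose B hB hQB using fun j => (Q j).exists_abs_eval_le
  refine ⟨B₀ * ∏ j ∈ univ.erase j₀, B j,
    mul_nonneg hB₀ (prod_nonneg fun j _ => hB j), fun q hq n => ?_⟩
  have hqn : ∀ j, q ^ n j ∈ Set.Icc (0 : ℝ) 1 := fun j =>
    ⟨pow_nonneg hq.1 _, pow_le_one₀ hq.1 hq.2⟩
  rw [← mul_prod_erase univ _ (mem_univ j₀), mul_right_comm]
  exact mul_le_mul (hQ₀ _ (hqn j₀))
    (prod_le_prod (fun j _ => abs_nonneg _) fun j _ => hQB j _ (hqn j))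
    (prod_nonneg fun j _ => abs_nonneg _) (mul_nonneg hB₀ (hqn j₀).1)

theorem prod_one_sub_div_one_sub_pow_pow_le {ι : Type*} [Fintype ι] {j₀ : ι} {q : ℝ}
    (hq₀ : 0 < q) (hq₁ : q < 1) (s : ι → ℕ) {n : ι → ℕ} (hn : ∀ j, 0 < n j)
    (hn₀ : ∀ j, n j ≤ n j₀) :
    ∏ j, ((1 - q) / (1 - q ^ n j)) ^ s j ≤
      (1 - Real.log (q ^ n j₀)) ^ (∑ j, s j) * ∏ j, 1 / (n j : ℝ) ^ s j := by
  have hratio : ∀ j, 0 ≤ (1 - q) / (1 - q ^ n j) := fun j =>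
    div_nonneg (by linarith) (by linarith [pow_le_one₀ hq₀.le hq₁.le (n := n j)])
  rw [← prod_pow_eq_pow_sum, ← prod_mul_distrib]
  refine prod_le_prod (fun j _ => pow_nonneg (hratio j) _) fun j _ => ?_
  rw [mul_one_div, ← div_pow]
  refine pow_le_pow_left₀ (hratio j) ?_ _
  refine (one_sub_div_one_sub_pow_le hq₀ hq₁ (hn j)).trans
    (div_le_div_of_nonneg_right ?_ (by positivity))
  gcongr 1 - ?_
  exact Real.log_le_log (pow_pos hq₀ _) (pow_le_pow_of_le_one hq₀.le hq₁.le (hn₀ j))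

theorem pow_sum_mul_prod_div_pow {ι K : Type*} [Fintype ι] [Field K] (c : K) (a b : ι → K)
    (s : ι → ℕ) : c ^ (∑ j, s j) * ∏ j, a j / b j ^ s j = ∏ j, a j * (c / b j) ^ s j := by
  rw [← prod_pow_eq_pow_sum, ← prod_mul_distrib]
  exact prod_congr rfl fun j _ => by rw [div_pow]; ring

theorem exists_abs_prod_eval_mul_one_sub_div_one_sub_pow_pow_le {ι : Type*} [Fintype ι] (j₀ : ι)
    (s : ι → ℕ) (Q : ι → ℝ[X]) (hQ : (Q j₀).coeff 0 = 0) :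
    ∃ C, ∀ q ∈ Set.Ioo (0 : ℝ) 1, ∀ n : ι → ℕ, (∀ j, 0 < n j) → (∀ j, n j ≤ n j₀) →
      |∏ j, (Q j).eval (q ^ n j) * ((1 - q) / (1 - q ^ n j)) ^ s j| ≤
        C * ∏ j, 1 / (n j : ℝ) ^ s j := by
  obtain ⟨C, hC₀, hC⟩ := Polynomial.exists_prod_abs_eval_pow_le Q hQ
  refine ⟨C * ((∑ j, s j).factorial * Real.exp 1), fun q ⟨hq₀, hq₁⟩ n hn hn₀ => ?_⟩
  set x := q ^ n j₀
  have hratio : ∀ j, 0 ≤ ((1 - q) / (1 - q ^ n j)) ^ s j := fun j =>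
    pow_nonneg (div_nonneg (by linarith) (by linarith [pow_le_one₀ hq₀.le hq₁.le (n := n j)])) _
  calc |∏ j, (Q j).eval (q ^ n j) * ((1 - q) / (1 - q ^ n j)) ^ s j|
      = (∏ j, |(Q j).eval (q ^ n j)|) * ∏ j, ((1 - q) / (1 - q ^ n j)) ^ s j := by
        rw [abs_prod, ← prod_mul_distrib]
        exact prod_congr rfl fun j _ => by rw [abs_mul, abs_of_nonneg (hratio j)]
    _ ≤ (C * x) * ((1 - Real.log x) ^ (∑ j, s j) * ∏ j, 1 / (n j : ℝ) ^ s j) :=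
        mul_le_mul (hC q ⟨hq₀.le, hq₁.le⟩ n) (prod_one_sub_div_one_sub_pow_pow_le hq₀ hq₁ s hn hn₀)
          (prod_nonneg fun j _ => hratio j) (by positivity)
    _ = C * (x * (1 - Real.log x) ^ (∑ j, s j)) * ∏ j, 1 / (n j : ℝ) ^ s j := by ring
    _ ≤ C * ((∑ j, s j).factorial * Real.exp 1) * ∏ j, 1 / (n j : ℝ) ^ s j := by
        refine mul_le_mul_of_nonneg_right (mul_le_mul_of_nonneg_left ?_ hC₀) (by positivity)
        exact mul_one_sub_log_pow_le (pow_pos hq₀ _) (pow_le_one₀ hq₀.le hq₁.le) _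

/-- Let l ≥ 1, s_1 ≥ 2, s_2,…,s_l ≥ 1 and Q_1 ∈ tℝ[t], Q_2,…,Q_l ∈ ℝ[t].
For 0 < q < 1 the series
F(q) = Σ_{n_1>⋯>n_l>0} Q_1(q^{n_1})⋯Q_l(q^{n_l}) / ((1−q^{n_1})^{s_1}⋯(1−q^{n_l})^{s_l})
converges, and (1−q)^{s_1+⋯+s_l}·F(q) → Q_1(1)⋯Q_l(1)·ζ(s_1,…,s_l) as q → 1⁻,
where ζ(s_1,…,s_l) = Σ_{n_1>⋯>n_l>0} 1/(n_1^{s_1}⋯n_l^{s_l}). -/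
theorem zetaQ_tendsto_mzv (l : ℕ) (hl : 0 < l) (s : Fin l → ℕ)
    (hs₁ : 2 ≤ s ⟨0, hl⟩) (hs : ∀ j, 1 ≤ s j)
    (Q : Fin l → Polynomial ℝ) (hQ₁ : (Q ⟨0, hl⟩).coeff 0 = 0) :
    (∀ q ∈ Set.Ioo (0 : ℝ) 1,
      Summable fun n : {n : Fin l → ℕ // StrictAnti n ∧ ∀ i, 0 < n i} =>
        ∏ j, (Q j).eval (q ^ n.1 j) / (1 - q ^ n.1 j) ^ s j) ∧
    Tendsto
      (fun q : ℝ => (1 - q) ^ (∑ j, s j) *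
        ∑' n : {n : Fin l → ℕ // StrictAnti n ∧ ∀ i, 0 < n i},
          ∏ j, (Q j).eval (q ^ n.1 j) / (1 - q ^ n.1 j) ^ s j)
      (nhdsWithin 1 (Set.Ioo (0 : ℝ) 1))
      (nhds ((∏ j, (Q j).eval 1) *
        ∑' n : {n : Fin l → ℕ // StrictAnti n ∧ ∀ i, 0 < n i},
          ∏ j, 1 / (n.1 j : ℝ) ^ s j)) := by
  obtain ⟨C, hC⟩ := exists_abs_prod_eval_mul_one_sub_div_one_sub_pow_pow_le ⟨0, hl⟩ s Q hQ₁
  have hmaj := (summable_multipleZeta hl hs₁ hs).mul_left C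
  have hdom : ∀ q ∈ Set.Ioo (0 : ℝ) 1, ∀ n : {n : Fin l → ℕ // StrictAnti n ∧ ∀ i, 0 < n i},
      ‖(1 - q) ^ (∑ j, s j) * ∏ j, (Q j).eval (q ^ n.1 j) / (1 - q ^ n.1 j) ^ s j‖ ≤
        C * ∏ j, 1 / (n.1 j : ℝ) ^ s j := fun q hq n => by
    rw [pow_sum_mul_prod_div_pow]
    exact hC q hq n.1 n.2.2 fun j => n.2.1.antitone (Fin.le_iff_val_le_val.2 (Nat.zero_le _))
  refine ⟨fun q hq => ?_, ?_⟩
  · rw [← summable_mul_left_iff (pow_ne_zero (∑ j, s j) (sub_ne_zero.2 hq.2.ne'))]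
    exact hmaj.of_norm_bounded (hdom q hq)
  · simp only [← tsum_mul_left, ← prod_mul_distrib, mul_one_div]
    refine tendsto_tsum_of_dominated_convergence hmaj (fun n => ?_)
      (eventually_nhdsWithin_of_forall hdom)
    simp only [pow_sum_mul_prod_div_pow]
    exact tendsto_finsetProd _ fun j _ =>
      (tendsto_eval_pow_mul_one_sub_div_one_sub_pow (Q j) (n.2.2 j) (s j)).mono_left
        (nhdsWithin_mono _ fun q hq => hq.2.ne)
end

section
/- The ℚ-vector space Z_q°[1] equals the ℚ-span of the brackets with all entries at least 2: Z_q°[1] = ⟨ [s_1,…,s_l] : l ≥ 0, s_1,…,s_l ≥ 2 ⟩_ℚ. Moreover this space also equals the ℚ-span of the Bradley–Zhao series ζ^BZ_q(s_1,…,s_l) := ζ_q(s_1,…,s_l; t^{s_1−1},…,t^{s_l−1}) with all s_j ≥ 2. -/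
/-- The bi-bracket [s_1,…,s_l ; r_1,…,r_l] ∈ ℚ[[q]]: the coefficient of q^m is the
sum over tuples u_1 > ⋯ > u_l > 0 and v_1,…,v_l > 0 with u_1v_1+⋯+u_lv_l = m of
Π_j (u_j^{r_j}/r_j!)·(v_j^{s_j−1}/(s_j−1)!). -/
noncomputable def biBracket (l : ℕ) (s r : Fin l → ℕ) : PowerSeries ℚ :=
  PowerSeries.mk fun m =>
    ∑' uv : {p : (Fin l → ℕ) × (Fin l → ℕ) //
        StrictAnti p.1 ∧ (∀ i, 0 < p.1 i) ∧ (∀ i, 0 < p.2 i)},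
      if (∑ j, uv.1.1 j * uv.1.2 j) = m then
        ∏ j, ((uv.1.1 j : ℚ) ^ r j / (r j).factorial) *
             ((uv.1.2 j : ℚ) ^ (s j - 1) / (s j - 1).factorial)
      else 0

/-- Z_q°[1]: the ℚ-span of the ζ_q(s_1,…,s_l;Q_1,…,Q_l) with l ≥ 0, all s_j ≥ 1,
deg Q_j ≤ s_j − 1 (i.e. Q_j = 0 or natDegree Q_j + 1 ≤ s_j) and all Q_j ∈ tℚ[t]. -/
noncomputable def Zqc1 : Submodule ℚ (PowerSeries ℚ) :=
  Submodule.span ℚ {f | ∃ (l : ℕ) (s : Fin l → ℕ) (Q : Fin l → Polynomial ℚ),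
    (∀ j, 1 ≤ s j) ∧ (∀ j, Q j = 0 ∨ (Q j).natDegree + 1 ≤ s j) ∧
    (∀ j, (Q j).coeff 0 = 0) ∧ f = zetaQ l s Q}

/-!
For polynomials p_1, …, p_l put
  U(p_1,…,p_l) = ∑_{n_1>⋯>n_l>0} ∑_{v_1,…,v_l>0} p_1(v_1)⋯p_l(v_l) q^{n_1v_1+⋯+n_lv_l},
a multilinear function of the p_j. If Q(0) = 0 and deg Q ≤ s − 1, the coefficients of
Q(t)/(1 − t)^s are the values P(v) of a polynomial P with P(0) = 0, and substituting
t = q^n factor by factor gives ζ_q(s_1,…,s_l;Q_1,…,Q_l) = U(P_1,…,P_l). The bracket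
[s_1,…,s_l] is U at the monomials v^{s_j−1}/(s_j−1)!, and ζ^BZ_q(s_1,…,s_l) is U at the
binomials (v choose s_j−1). Either family (s_j ≥ 2) spans the polynomials vanishing at 0,
so by multilinearity every generator of Z_q°[1] is a combination of brackets, every
bracket is a combination of Bradley–Zhao series, and these lie in Z_q°[1].
-/

open Finset Polynomial
open scoped Nat

theorem MultilinearMap.map_mem_span_image_pi {R ι : Type*} {M : ι → Type*} {N : Type*}
    [CommSemiring R] [Fintype ι] [∀ i, AddCommMonoid (M i)] [∀ i, Module R (M i)]
    [AddCommMonoid N] [Module R N] (f : MultilinearMap R M N) {F : ∀ i, Set (M i)}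
    {p : ∀ i, M i} (hp : ∀ i, p i ∈ Submodule.span R (F i)) :
    f p ∈ Submodule.span R (f '' Set.univ.pi F) := by
  classical
  choose n c g hg using fun i => Submodule.mem_span_set'.1 (hp i)
  rw [show p = fun i => ∑ k, c i k • (g i k : M i) from funext fun i => (hg i).symm,
    f.map_sum]
  refine Submodule.sum_mem _ fun r _ => ?_
  rw [f.map_smul_univ]
  exact Submodule.smul_mem _ _ (Submodule.subset_span ⟨_, fun i _ => (g i (r i)).2, rfl⟩)

namespace PowerSeries

theorem coeff_zero_coe_mul {R : Type*} [CommSemiring R] {Q : R[X]} (hQ : Q.coeff 0 = 0)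
    (F : PowerSeries R) : coeff 0 ((Q : PowerSeries R) * F) = 0 := by
  rw [coeff_zero_eq_constantCoeff_apply, map_mul, constantCoeff_coe, hQ, zero_mul]

theorem expand_coe {R : Type*} [CommRing R] (p : ℕ) (hp : p ≠ 0) (Q : R[X]) :
    expand p hp (Q : PowerSeries R) = Polynomial.aeval (X ^ p : PowerSeries R) Q := by
  have h : (expand p hp).comp (coeToPowerSeries.algHom R) =
      Polynomial.aeval (X ^ p : PowerSeries R) := Polynomial.algHom_ext (by simp)
  simpa using congr($h Q)

theorem coeff_prod_expand {R ι : Type*} [CommRing R] [Fintype ι] [DecidableEq ι]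
    (n : ι → ℕ) (hn : ∀ i, n i ≠ 0) (G : ι → PowerSeries R) (m : ℕ) :
    coeff m (∏ i, expand (n i) (hn i) (G i)) =
      ∑ v ∈ Fintype.piFinset (fun _ => range (m + 1)) with ∑ i, n i * v i = m,
        ∏ i, coeff (v i) (G i) := by
  rw [coeff_prod]
  simp_rw [coeff_expand, prod_ite_zero]
  simp only [mem_univ, true_implies]
  rw [← sum_filter]
  refine sum_nbij' (fun e i => e i / n i)
    (fun v => Finsupp.equivFunOnFinite.symm fun i => n i * v i) ?_ ?_ ?_ ?_ ?_
  · simp only [mem_filter, mem_finsuppAntidiag, Fintype.mem_piFinset, mem_range]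
    rintro e ⟨⟨rfl, -⟩, hdvd⟩
    refine ⟨fun i => Nat.lt_succ_of_le ((Nat.div_le_self _ _).trans
      (single_le_sum (fun j _ => Nat.zero_le (e j)) (mem_univ i))), ?_⟩
    exact sum_congr rfl fun i _ => Nat.mul_div_cancel' (hdvd i)
  · simp only [mem_filter, mem_finsuppAntidiag, Fintype.mem_piFinset]
    rintro v ⟨-, rfl⟩
    exact ⟨⟨by simp, subset_univ _⟩, fun i => by simp⟩
  · simp only [mem_filter]
    rintro e ⟨-, hdvd⟩
    ext i
    simp [Nat.mul_div_cancel' (hdvd i)]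
  · intro v _
    ext i
    simp [Nat.mul_div_cancel_left _ (Nat.pos_of_ne_zero (hn i))]
  · intro e _
    rfl

variable {k : Type*} [Field k]

theorem expand_inv (p : ℕ) (hp : p ≠ 0) (f : PowerSeries k) :
    expand p hp f⁻¹ = (expand p hp f)⁻¹ := by
  by_cases hf : constantCoeff f = 0
  · rw [inv_eq_zero.2 hf, inv_eq_zero.2 (by rwa [constantCoeff_expand]), map_zero]
  · rw [eq_inv_iff_mul_eq_one (by rwa [constantCoeff_expand]), ← map_mul,
      PowerSeries.inv_mul_cancel f hf, map_one]

theorem inv_one_sub_X : (1 - X : PowerSeries k)⁻¹ = mk 1 :=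
  ((eq_inv_iff_mul_eq_one (by simp)).2 (mk_one_mul_one_sub_eq_one k)).symm

theorem coeff_inv_one_sub_X_pow (d v : ℕ) :
    coeff v ((1 - X : PowerSeries k)⁻¹ ^ (d + 1)) = (d + v).choose d := by
  rw [inv_one_sub_X, mk_one_pow_eq_mk_choose_add, coeff_mk]

theorem coeff_X_pow_mul_inv_one_sub_X_pow {i d : ℕ} (hi : i ≤ d) (v : ℕ) :
    coeff v ((X ^ i : PowerSeries k) * (1 - X)⁻¹ ^ (d + 1)) = ((v + d - i).choose d : k) := by
  rw [coeff_X_pow_mul']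
  split_ifs with hv
  · rw [coeff_inv_one_sub_X_pow, show v + d - i = d + (v - i) by omega]
  · rw [Nat.choose_eq_zero_of_lt (by omega), Nat.cast_zero]

theorem aeval_X_pow_mul_inv_one_sub_X_pow_pow (n : ℕ) (hn : n ≠ 0) (Q : k[X]) (s : ℕ) :
    Polynomial.aeval (X ^ n) Q * ((1 - X ^ n)⁻¹) ^ s =
      expand n hn ((Q : PowerSeries k) * (1 - X)⁻¹ ^ s) := by
  rw [map_mul, map_pow, expand_inv, map_sub, map_one, expand_X, expand_coe]

end PowerSeries

section ChoosePoly

variable (K : Type*) [Field K]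

noncomputable def choosePoly (d : ℕ) : K[X] := (d ! : K)⁻¹ • descPochhammer K d

variable {K}

theorem choosePoly_eval_natCast [CharZero K] (d n : ℕ) :
    (choosePoly K d).eval (n : K) = n.choose d := by
  rw [choosePoly, eval_smul, descPochhammer_eval_eq_descFactorial,
    Nat.descFactorial_eq_factorial_mul_choose, smul_eq_mul, Nat.cast_mul,
    inv_mul_cancel_left₀ (by exact_mod_cast d.factorial_ne_zero)]

theorem natDegree_choosePoly [CharZero K] (d : ℕ) : (choosePoly K d).natDegree = d := by
  rw [choosePoly, natDegree_smul _ (inv_ne_zero (by exact_mod_cast d.factorial_ne_zero)),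
    descPochhammer_natDegree]

theorem coeff_choosePoly_self (d : ℕ) : (choosePoly K d).coeff d = (d ! : K)⁻¹ := by
  have h := (monic_descPochhammer K d).coeff_natDegree
  rw [descPochhammer_natDegree] at h
  rw [choosePoly, coeff_smul, h, smul_eq_mul, mul_one]

theorem coeff_choosePoly_zero [CharZero K] {d : ℕ} (hd : d ≠ 0) :
    (choosePoly K d).coeff 0 = 0 := by
  rw [coeff_zero_eq_eval_zero, ← Nat.cast_zero, choosePoly_eval_natCast,
    Nat.choose_eq_zero_of_lt (Nat.pos_of_ne_zero hd), Nat.cast_zero]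

theorem mem_span_choosePoly [CharZero K] {p : K[X]} (hp : p.coeff 0 = 0) :
    p ∈ Submodule.span K (choosePoly K '' Set.Ici 1) := by
  induction hN : p.natDegree using Nat.strong_induction_on generalizing p with
  | _ N ih =>
    rcases N with _ | N
    · rw [eq_C_of_natDegree_eq_zero hN, hp, C_0]
      exact zero_mem _
    set q := p - (p.coeff (N + 1) * (N + 1)!) • choosePoly K (N + 1)
    have hq0 : q.coeff 0 = 0 := by simp [q, hp, coeff_choosePoly_zero]
    have hqN : q.natDegree < N + 1 := by
      have hle : q.natDegree ≤ N + 1 := (natDegree_sub_le _ _).trans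
        (max_le hN.le ((natDegree_smul_le _ _).trans (natDegree_choosePoly _).le))
      have := natDegree_le_pred hle (by simp [q, coeff_choosePoly_self, Nat.factorial_ne_zero])
      omega
    rw [← sub_add_cancel p ((p.coeff (N + 1) * (N + 1)!) • choosePoly K (N + 1))]
    exact add_mem (ih _ hqN hq0 rfl)
      (Submodule.smul_mem _ _ (Submodule.subset_span ⟨N + 1, by simp, rfl⟩))

theorem mem_span_monomial_div_factorial [CharZero K] {p : K[X]} (hp : p.coeff 0 = 0) :
    p ∈ Submodule.span K ((fun d => (d ! : K)⁻¹ • X ^ d) '' Set.Ici 1) := by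
  rw [p.as_sum_support]
  refine Submodule.sum_mem _ fun d hd => ?_
  have hd0 : d ≠ 0 := by rintro rfl; exact mem_support_iff.1 hd hp
  rw [← C_mul_X_pow_eq_monomial, ← smul_eq_C_mul,
    ← mul_inv_cancel_right₀ (Nat.cast_ne_zero.2 d.factorial_ne_zero) (p.coeff d), mul_smul]
  exact Submodule.smul_mem _ _ (Submodule.subset_span ⟨d, Nat.one_le_iff_ne_zero.2 hd0, rfl⟩)

theorem exists_eval_eq_coeff_mul_inv_one_sub_X_pow [CharZero K] {d : ℕ} {Q : K[X]}
    (hQ : Q.natDegree ≤ d) :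
    ∃ P : K[X], ∀ v : ℕ, P.eval (v : K) =
      PowerSeries.coeff v ((Q : PowerSeries K) * (1 - PowerSeries.X)⁻¹ ^ (d + 1)) := by
  classical
  have hmem : Q ∈ degreeLE K d := mem_degreeLE.2 (natDegree_le_iff_degree_le.1 hQ)
  rw [degreeLE_eq_span_X_pow] at hmem
  clear hQ
  induction hmem using Submodule.span_induction with
  | mem Q hQ =>
    obtain ⟨i, hi, rfl⟩ : ∃ i, i < d + 1 ∧ X ^ i = Q := by simpa using hQ
    refine ⟨(choosePoly K d).comp (X + C ((d - i : ℕ) : K)), fun v => ?_⟩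
    rw [eval_comp, eval_add, eval_X, eval_C, ← Nat.cast_add, choosePoly_eval_natCast,
      Polynomial.coe_pow, Polynomial.coe_X,
      PowerSeries.coeff_X_pow_mul_inv_one_sub_X_pow (by omega),
      show v + (d - i) = v + d - i by omega]
  | zero => exact ⟨0, by simp⟩
  | add Q₁ Q₂ _ _ h₁ h₂ =>
    obtain ⟨P₁, h₁⟩ := h₁
    obtain ⟨P₂, h₂⟩ := h₂
    exact ⟨P₁ + P₂, by simp [h₁, h₂, add_mul]⟩
  | smul c Q _ h =>
    obtain ⟨P, h⟩ := h
    exact ⟨c • P, by simp [h]⟩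

end ChoosePoly

def tuplesIcc (l m : ℕ) : Finset (Fin l → ℕ) := Fintype.piFinset fun _ => Icc 1 m

theorem mem_tuplesIcc {l m : ℕ} {n : Fin l → ℕ} :
    n ∈ tuplesIcc l m ↔ ∀ i, 1 ≤ n i ∧ n i ≤ m := by
  simp [tuplesIcc]

theorem mem_tuplesIcc_of_sum_mul_eq {l m : ℕ} {u v : Fin l → ℕ} (hu : ∀ i, 0 < u i)
    (hv : ∀ i, 0 < v i) (h : ∑ i, u i * v i = m) : u ∈ tuplesIcc l m :=
  mem_tuplesIcc.2 fun i => ⟨hu i, (Nat.le_mul_of_pos_right _ (hv i)).trans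
    (h ▸ single_le_sum (fun j _ => Nat.zero_le (u j * v j)) (mem_univ i))⟩

section PolyBracket

variable {R : Type*} [CommSemiring R]

noncomputable def evalProd {l : ℕ} (v : Fin l → ℕ) :
    MultilinearMap R (fun _ : Fin l => R[X]) R :=
  (MultilinearMap.mkPiAlgebra R (Fin l) R).compLinearMap fun j => leval (v j : R)

theorem evalProd_apply {l : ℕ} (v : Fin l → ℕ) (p : Fin l → R[X]) :
    evalProd v p = ∏ j, (p j).eval (v j : R) := by
  simp [evalProd]

-- The q^m-coefficient of U(p) from the header: n_j v_j ≤ m confines all n_j, v_j to [1, m].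
open Classical in
noncomputable def polyBracketCoeff (l m : ℕ) : MultilinearMap R (fun _ : Fin l => R[X]) R :=
  ∑ n ∈ tuplesIcc l m, ∑ v ∈ tuplesIcc l m,
    if StrictAnti n ∧ ∑ j, n j * v j = m then evalProd v else 0

noncomputable def polyBracket (l : ℕ) :
    MultilinearMap R (fun _ : Fin l => R[X]) (PowerSeries R) where
  toFun p := PowerSeries.mk fun m => polyBracketCoeff l m p
  map_update_add' p i x y := by ext m; simp
  map_update_smul' p i c x := by ext m; simp

open Classical in
theorem coeff_polyBracket (l m : ℕ) (p : Fin l → R[X]) :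
    PowerSeries.coeff m (polyBracket l p) = ∑ n ∈ tuplesIcc l m, ∑ v ∈ tuplesIcc l m,
      if StrictAnti n ∧ ∑ j, n j * v j = m then ∏ j, (p j).eval (v j : R) else 0 := by
  simp only [polyBracket, polyBracketCoeff, MultilinearMap.coe_mk, PowerSeries.coeff_mk,
    _root_.sum_apply]
  refine sum_congr rfl fun n _ => sum_congr rfl fun v _ => ?_
  split_ifs <;> simp [evalProd_apply]

end PolyBracket

section ZetaQ

variable {l : ℕ} {s : Fin l → ℕ} {Q P : Fin l → ℚ[X]}

theorem coeff_zetaQ_summand (h0 : ∀ j, (Q j).coeff 0 = 0)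
    (hP : ∀ j, ∀ v : ℕ, 0 < v →
      (P j).eval (v : ℚ) =
        PowerSeries.coeff v ((Q j : PowerSeries ℚ) * (1 - PowerSeries.X)⁻¹ ^ s j))
    {n : Fin l → ℕ} (hn : ∀ j, 0 < n j) (m : ℕ) :
    PowerSeries.coeff m
        (∏ j, aeval (PowerSeries.X ^ n j) (Q j) * ((1 - PowerSeries.X ^ n j)⁻¹) ^ s j) =
      ∑ v ∈ tuplesIcc l m with ∑ j, n j * v j = m, ∏ j, (P j).eval (v j : ℚ) := by
  simp_rw [PowerSeries.aeval_X_pow_mul_inv_one_sub_X_pow_pow _ (hn _).ne']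
  rw [PowerSeries.coeff_prod_expand]
  symm
  refine sum_subset_zero_on_sdiff (filter_subset_filter _ ?_) (fun v hv => ?_) (fun v hv => ?_)
  · exact Fintype.piFinset_subset _ _ fun _ => by grind
  · obtain ⟨j, hj⟩ : ∃ j, v j = 0 := by
      rw [mem_sdiff, mem_filter, mem_filter, mem_tuplesIcc, Fintype.mem_piFinset] at hv
      by_contra! h
      exact hv.2 ⟨fun j => ⟨Nat.one_le_iff_ne_zero.2 (h j),
        Nat.lt_succ_iff.1 (mem_range.1 (hv.1.1 j))⟩, hv.1.2⟩
    exact prod_eq_zero (mem_univ j) (hj ▸ PowerSeries.coeff_zero_coe_mul (h0 j) _)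
  · rw [mem_filter, mem_tuplesIcc] at hv
    exact prod_congr rfl fun j _ => hP j _ (hv.1 j).1

theorem zetaQ_eq_polyBracket (h0 : ∀ j, (Q j).coeff 0 = 0)
    (hP : ∀ j, ∀ v : ℕ, 0 < v →
      (P j).eval (v : ℚ) =
        PowerSeries.coeff v ((Q j : PowerSeries ℚ) * (1 - PowerSeries.X)⁻¹ ^ s j)) :
    zetaQ l s Q = polyBracket l P := by
  classical
  ext m
  rw [zetaQ, PowerSeries.coeff_mk, coeff_polyBracket,
    tsum_eq_sum (s := (tuplesIcc l m).subtype _) fun n hn => ?_,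
    sum_subtype_eq_sum_filter (fun n : Fin l → ℕ => PowerSeries.coeff m
      (∏ j, aeval (PowerSeries.X ^ n j) (Q j) * ((1 - PowerSeries.X ^ n j)⁻¹) ^ s j)),
    sum_filter]
  · refine sum_congr rfl fun n hn => ?_
    have hpos : ∀ i, 0 < n i := fun i => (mem_tuplesIcc.1 hn i).1
    by_cases hanti : StrictAnti n
    · rw [if_pos ⟨hanti, hpos⟩, coeff_zetaQ_summand h0 hP hpos, sum_filter]
      simp only [hanti, true_and]
    · simp [hanti]
  · rw [coeff_zetaQ_summand h0 hP n.2.2]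
    refine sum_eq_zero fun v hv => absurd (mem_subtype.2 ?_) hn
    rw [mem_filter, mem_tuplesIcc] at hv
    exact mem_tuplesIcc_of_sum_mul_eq n.2.2 (fun i => (hv.1 i).1) hv.2

theorem exists_zetaQ_eq_polyBracket (hs : ∀ j, 1 ≤ s j)
    (hdeg : ∀ j, Q j = 0 ∨ (Q j).natDegree + 1 ≤ s j) (h0 : ∀ j, (Q j).coeff 0 = 0) :
    ∃ P : Fin l → ℚ[X], (∀ j, (P j).coeff 0 = 0) ∧ zetaQ l s Q = polyBracket l P := by
  have hdeg' : ∀ j, (Q j).natDegree ≤ s j - 1 := fun j => by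
    rcases hdeg j with h | h
    · simp [h]
    · omega
  choose P hP using fun j => exists_eval_eq_coeff_mul_inv_one_sub_X_pow (hdeg' j)
  refine ⟨P, fun j => ?_, zetaQ_eq_polyBracket h0 fun j v _ => ?_⟩
  · have h := hP j 0
    rwa [Nat.cast_zero, PowerSeries.coeff_zero_coe_mul (h0 j), ← coeff_zero_eq_eval_zero] at h
  · rw [hP, Nat.sub_add_cancel (hs j)]

theorem zetaQ_X_pow_eq_polyBracket_choosePoly (d : Fin l → ℕ) (hd : ∀ j, d j ≠ 0) :
    zetaQ l (fun j => d j + 1) (fun j => X ^ d j) = polyBracket l fun j => choosePoly ℚ (d j) :=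
  zetaQ_eq_polyBracket (fun j => by simp [coeff_X_pow, (hd j).symm]) fun j v _ => by
    rw [choosePoly_eval_natCast, Polynomial.coe_pow, Polynomial.coe_X,
      PowerSeries.coeff_X_pow_mul_inv_one_sub_X_pow le_rfl, Nat.add_sub_cancel]

end ZetaQ

theorem biBracket_eq_polyBracket (l : ℕ) (s : Fin l → ℕ) :
    biBracket l s (fun _ => 0) =
      polyBracket l fun j => ((s j - 1)! : ℚ)⁻¹ • X ^ (s j - 1) := by
  classical
  ext m
  rw [biBracket, PowerSeries.coeff_mk, coeff_polyBracket, ← sum_product',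
    tsum_eq_sum (s := (tuplesIcc l m ×ˢ tuplesIcc l m).subtype _) fun uv huv => ?_,
    sum_subtype_eq_sum_filter (fun uv : (Fin l → ℕ) × (Fin l → ℕ) =>
      if ∑ j, uv.1 j * uv.2 j = m then
        ∏ j, ((uv.1 j : ℚ) ^ 0 / (0 : ℕ)!) * ((uv.2 j : ℚ) ^ (s j - 1) / (s j - 1)!)
      else 0),
    sum_filter]
  · refine sum_congr rfl fun uv huv => ?_
    rw [mem_product, mem_tuplesIcc, mem_tuplesIcc] at huv
    have hu : ∀ i, 0 < uv.1 i := fun i => (huv.1 i).1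
    have hv : ∀ i, 0 < uv.2 i := fun i => (huv.2 i).1
    by_cases hanti : StrictAnti uv.1
    · simp [hanti, hu, hv, div_eq_inv_mul]
    · simp [hanti]
  · refine if_neg fun hm => huv (mem_subtype.2 (mem_product.2 ⟨?_, ?_⟩))
    · exact mem_tuplesIcc_of_sum_mul_eq uv.2.2.1 uv.2.2.2 hm
    · simp_rw [mul_comm (uv.1.1 _)] at hm
      exact mem_tuplesIcc_of_sum_mul_eq uv.2.2.2 uv.2.2.1 hm

noncomputable def bracketSpan : Submodule ℚ (PowerSeries ℚ) :=
  Submodule.span ℚ {f | ∃ (l : ℕ) (s : Fin l → ℕ),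
    (∀ j, 2 ≤ s j) ∧ f = biBracket l s (fun _ => 0)}

noncomputable def bradleyZhaoSpan : Submodule ℚ (PowerSeries ℚ) :=
  Submodule.span ℚ {f | ∃ (l : ℕ) (s : Fin l → ℕ),
    (∀ j, 2 ≤ s j) ∧ f = zetaQ l s (fun j => Polynomial.X ^ (s j - 1))}

theorem Zqc1_le_bracketSpan : Zqc1 ≤ bracketSpan := by
  refine Submodule.span_le.2 ?_
  rintro _ ⟨l, s, Q, hs, hdeg, h0, rfl⟩
  obtain ⟨P, hP0, hP⟩ := exists_zetaQ_eq_polyBracket hs hdeg h0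
  rw [SetLike.mem_coe, hP]
  refine Submodule.span_le.2 ?_
    ((polyBracket l).map_mem_span_image_pi fun j => mem_span_monomial_div_factorial (hP0 j))
  rintro _ ⟨q, hq, rfl⟩
  choose d hd hqd using fun j => hq j (Set.mem_univ j)
  refine Submodule.subset_span ⟨l, fun j => d j + 1, fun j => by grind, ?_⟩
  rw [biBracket_eq_polyBracket, ← funext hqd]
  simp

theorem bracketSpan_le_bradleyZhaoSpan : bracketSpan ≤ bradleyZhaoSpan := by
  refine Submodule.span_le.2 ?_
  rintro _ ⟨l, s, hs, rfl⟩
  rw [SetLike.mem_coe, biBracket_eq_polyBracket]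
  refine Submodule.span_le.2 ?_ ((polyBracket l).map_mem_span_image_pi fun j =>
    mem_span_choosePoly (by rw [coeff_smul, coeff_X_pow, if_neg (by grind), smul_zero]))
  rintro _ ⟨q, hq, rfl⟩
  choose d hd hqd using fun j => hq j (Set.mem_univ j)
  refine Submodule.subset_span ⟨l, fun j => d j + 1, fun j => by grind, ?_⟩
  rw [← funext hqd, ← zetaQ_X_pow_eq_polyBracket_choosePoly d fun j => by grind]
  simp

theorem bradleyZhaoSpan_le_Zqc1 : bradleyZhaoSpan ≤ Zqc1 := by
  refine Submodule.span_le.2 ?_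
  rintro _ ⟨l, s, hs, rfl⟩
  refine Submodule.subset_span ⟨l, s, _, fun j => by grind,
    fun j => Or.inr (by rw [natDegree_X_pow]; grind),
    fun j => by rw [coeff_X_pow, if_neg (by grind)], rfl⟩

/-- Z_q°[1] equals the ℚ-span of the brackets [s_1,…,s_l] with all s_j ≥ 2, and also
equals the ℚ-span of the Bradley–Zhao series
ζ^BZ_q(s_1,…,s_l) = ζ_q(s_1,…,s_l; t^{s_1−1},…,t^{s_l−1}) with all s_j ≥ 2. -/
theorem Zqc1_eq_span_brackets_ge_two :
    Zqc1 = Submodule.span ℚ {f | ∃ (l : ℕ) (s : Fin l → ℕ),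
      (∀ j, 2 ≤ s j) ∧ f = biBracket l s (fun _ => 0)} ∧
    Zqc1 = Submodule.span ℚ {f | ∃ (l : ℕ) (s : Fin l → ℕ),
      (∀ j, 2 ≤ s j) ∧ f = zetaQ l s (fun j => Polynomial.X ^ (s j - 1))} :=
  ⟨le_antisymm Zqc1_le_bracketSpan
    (bracketSpan_le_bradleyZhaoSpan.trans bradleyZhaoSpan_le_Zqc1),
  le_antisymm (Zqc1_le_bracketSpan.trans bracketSpan_le_bradleyZhaoSpan) bradleyZhaoSpan_le_Zqc1⟩
end

section
/- For all integers l ≥ 1, s_1,…,s_l ≥ 1 and r_1,…,r_l ≥ 0, the derivation q·d/dq on ℚ[[q]] satisfies q(d/dq)[s_1,…,s_l ; r_1,…,r_l] = Σ_{j=1}^{l} s_j(r_j+1)·[s_1,…,s_{j−1}, s_j+1, s_{j+1},…,s_l ; r_1,…,r_{j−1}, r_j+1, r_{j+1},…,r_l]. In particular q·d/dq maps the ℚ-span of bi-brackets of weight ≤ k and depth ≤ l into the ℚ-span of bi-brackets of weight ≤ k+2 and depth ≤ l. -/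
noncomputable def qd (f : PowerSeries ℚ) : PowerSeries ℚ :=
  PowerSeries.mk fun n => (n : ℚ) * PowerSeries.coeff n f

open Finset PowerSeries

theorem Finset.sum_mul_prod_eq_sum_mul_prod_update {ι R : Type*} [CommSemiring R]
    [DecidableEq ι] (s : Finset ι) (w c g g' : ι → R) (h : ∀ j ∈ s, w j * g j = c j * g' j) :
    (∑ j ∈ s, w j) * ∏ i ∈ s, g i = ∑ j ∈ s, c j * ∏ i ∈ s, Function.update g j (g' j) i := by
  rw [sum_mul]
  refine sum_congr rfl fun j hj => ?_
  rw [prod_update_of_mem hj, prod_eq_mul_prod_sdiff_singleton_of_mem hj, ← mul_assoc,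
    ← mul_assoc, h j hj]

theorem Fintype.sum_update_add {ι M : Type*} [Fintype ι] [DecidableEq ι] [AddCommMonoid M]
    (f : ι → M) (j : ι) (a : M) :
    ∑ i, Function.update f j (f j + a) i = ∑ i, f i + a := by
  rw [sum_update_of_mem (mem_univ j), sum_eq_add_sum_sdiff_singleton_of_mem (mem_univ j) f]
  abel

abbrev BiBracketIndex (l : ℕ) := {p : (Fin l → ℕ) × (Fin l → ℕ) //
    StrictAnti p.1 ∧ (∀ i, 0 < p.1 i) ∧ (∀ i, 0 < p.2 i)}

noncomputable def biBracketFactor (r s : ℕ) (u v : ℚ) : ℚ :=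
  u ^ r / r.factorial * (v ^ (s - 1) / (s - 1).factorial)

theorem coeff_biBracket (l : ℕ) (s r : Fin l → ℕ) (n : ℕ) :
    coeff n (biBracket l s r) = ∑' p : BiBracketIndex l,
      if ∑ j, p.1.1 j * p.1.2 j = n then
        ∏ j, biBracketFactor (r j) (s j) (p.1.1 j) (p.1.2 j) else 0 :=
  coeff_mk _ _

theorem mul_biBracketFactor (r s : ℕ) (u v : ℚ) (hs : 1 ≤ s) :
    u * v * biBracketFactor r s u v = s * (r + 1) * biBracketFactor (r + 1) (s + 1) u v := by
  obtain ⟨s, rfl⟩ := Nat.exists_eq_add_of_le' hs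
  have := r.factorial_pos
  have := s.factorial_pos
  simp only [biBracketFactor, Nat.add_sub_cancel, Nat.factorial_succ]
  push_cast
  field_simp
  ring

theorem finite_setOf_sum_mul_eq (l n : ℕ) :
    {p : (Fin l → ℕ) × (Fin l → ℕ) |
      (∀ i, 0 < p.1 i) ∧ (∀ i, 0 < p.2 i) ∧ ∑ j, p.1 j * p.2 j = n}.Finite := by
  refine ((Set.Finite.pi fun _ => Set.finite_Iic n).prod
    (Set.Finite.pi fun _ => Set.finite_Iic n)).subset ?_
  rintro ⟨u, v⟩ ⟨hu, hv, rfl⟩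
  have hle : ∀ j, u j * v j ≤ ∑ i, u i * v i := fun j =>
    single_le_sum (f := fun i => u i * v i) (fun _ _ => Nat.zero_le _) (mem_univ j)
  exact ⟨fun j _ => (Nat.le_mul_of_pos_right _ (hv j)).trans (hle j),
    fun j _ => (Nat.le_mul_of_pos_left _ (hu j)).trans (hle j)⟩

theorem summable_ite_sum_mul_eq (l n : ℕ) (F : BiBracketIndex l → ℚ) :
    Summable fun p : BiBracketIndex l => if ∑ j, p.1.1 j * p.1.2 j = n then F p else 0 := by
  refine summable_of_hasFiniteSupport <|
    ((finite_setOf_sum_mul_eq l n).preimage Subtype.val_injective.injOn).subset ?_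
  intro p hp
  exact ⟨p.2.2.1, p.2.2.2, by_contra fun h => hp (if_neg h)⟩

theorem qd_biBracket_eq_sum (l : ℕ) (s r : Fin l → ℕ) (hs : ∀ j, 1 ≤ s j) :
    qd (biBracket l s r) = ∑ j, ((s j : ℚ) * ((r j : ℚ) + 1)) •
      biBracket l (Function.update s j (s j + 1)) (Function.update r j (r j + 1)) := by
  ext n
  simp only [qd, coeff_mk, map_sum, coeff_smul, smul_eq_mul, coeff_biBracket, ← tsum_mul_left]
  rw [← Summable.tsum_finsetSum fun j _ => (summable_ite_sum_mul_eq l n _).mul_left _]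
  refine tsum_congr fun ⟨⟨u, v⟩, _⟩ => ?_
  split_ifs with h
  · subst h
    push_cast
    simp only [Function.apply_update₂ (fun j r s => biBracketFactor r s (u j) (v j))]
    exact sum_mul_prod_eq_sum_mul_prod_update _ _ _ _ _
      fun j _ => mul_biBracketFactor _ _ _ _ (hs j)
  · simp

noncomputable def qdLinearMap : PowerSeries ℚ →ₗ[ℚ] PowerSeries ℚ where
  toFun := qd
  map_add' f g := by ext n; simp [qd, mul_add]
  map_smul' a f := by ext n; simp [qd]; ring

def biBracketsOfWeightDepthLE (k l : ℕ) : Set (PowerSeries ℚ) :=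
  {g | ∃ (t : ℕ) (s r : Fin t → ℕ), (∀ j, 1 ≤ s j) ∧ t ≤ l ∧
    (∑ j, s j) + (∑ j, r j) ≤ k ∧ g = biBracket t s r}

theorem qd_mem_span_biBracketsOfWeightDepthLE {k l : ℕ} {g : PowerSeries ℚ}
    (hg : g ∈ biBracketsOfWeightDepthLE k l) :
    qd g ∈ Submodule.span ℚ (biBracketsOfWeightDepthLE (k + 2) l) := by
  obtain ⟨t, s, r, hs, ht, hw, rfl⟩ := hg
  rw [qd_biBracket_eq_sum t s r hs]
  refine Submodule.sum_mem _ fun j _ => Submodule.smul_mem _ _ (Submodule.subset_span ?_)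
  refine ⟨t, _, _, fun i => ?_, ht, ?_, rfl⟩
  · rcases eq_or_ne i j with rfl | hij
    · simp
    · simpa [hij] using hs i
  · rw [Fintype.sum_update_add, Fintype.sum_update_add]
    omega

/-- q(d/dq)[s_1,…,s_l ; r_1,…,r_l]
  = Σ_{j=1}^{l} s_j(r_j+1)·[s_1,…,s_j+1,…,s_l ; r_1,…,r_j+1,…,r_l], and consequently
q·d/dq maps the ℚ-span of bi-brackets of weight ≤ k and depth ≤ l into the ℚ-span of
bi-brackets of weight ≤ k+2 and depth ≤ l. -/
theorem qd_biBracket :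
    (∀ (l : ℕ), 1 ≤ l → ∀ (s r : Fin l → ℕ), (∀ j, 1 ≤ s j) →
      qd (biBracket l s r) =
        ∑ j, ((s j : ℚ) * ((r j : ℚ) + 1)) •
          biBracket l (Function.update s j (s j + 1)) (Function.update r j (r j + 1))) ∧
    (∀ (k l : ℕ) (f : PowerSeries ℚ),
      f ∈ Submodule.span ℚ {g | ∃ (t : ℕ) (s r : Fin t → ℕ), (∀ j, 1 ≤ s j) ∧ t ≤ l ∧
        (∑ j, s j) + (∑ j, r j) ≤ k ∧ g = biBracket t s r} →
      qd f ∈ Submodule.span ℚ {g | ∃ (t : ℕ) (s r : Fin t → ℕ), (∀ j, 1 ≤ s j) ∧ t ≤ l ∧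
        (∑ j, s j) + (∑ j, r j) ≤ k + 2 ∧ g = biBracket t s r}) := by
  refine ⟨fun l _ s r hs => qd_biBracket_eq_sum l s r hs, fun k l f hf => ?_⟩
  have hspan : Submodule.span ℚ (biBracketsOfWeightDepthLE k l) ≤
      (Submodule.span ℚ (biBracketsOfWeightDepthLE (k + 2) l)).comap qdLinearMap :=
    Submodule.span_le.mpr fun _ => qd_mem_span_biBracketsOfWeightDepthLE
  exact hspan hf
end

section
/- For every integer s ≥ 1 the polynomials t·P_{j−1}(t)·(1−t)^{s−j} for j = 1,…,s form a ℚ-basis of the s-dimensional ℚ-vector space { Q ∈ ℚ[t] : Q(0) = 0 and deg Q ≤ s }. In particular, for every Q ∈ tℚ[t] with deg Q ≤ s there are unique α_1,…,α_s ∈ ℚ with Q(t) = Σ_{j=1}^{s} α_j · t P_{j−1}(t) (1−t)^{s−j}. -/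
/-- The polynomial t·P_{s−1}(t) (for s ≥ 1), where P_{s−1} is the Eulerian polynomial:
it is defined by t·P_{s−1}(t) = (1−t)^s · Σ_{d≥1} d^{s−1} t^d; since this power series
is a polynomial of degree ≤ s it is recovered by truncation at degree s. -/
noncomputable def tEuler (s : ℕ) : Polynomial ℚ :=
  PowerSeries.trunc (s + 1)
    ((1 - PowerSeries.X) ^ s * PowerSeries.mk fun d => if d = 0 then 0 else (d : ℚ) ^ (s - 1))

/-- The Eulerian polynomial P_k(t), obtained from t·P_k(t) by dividing by t. -/
noncomputable def eulerianPoly (k : ℕ) : Polynomial ℚ := (tEuler (k + 1)).divX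

/-!
As power series, `t·P_{j−1}(t)·(1−t)^{s−j} = (1−t)^s · Σ_{d≥1} d^{j−1} t^d`. For `j = s` this is
the definition of `t·P_{s−1}`, and the truncation there loses nothing because the coefficient of
`t^n`, `n > s`, of the right-hand side is an `s`-th forward difference of `d ↦ d^{s−1}`, hence `0`.
Since `(1−t)^s` is a non-zero-divisor and a polynomial is determined by its values at the positive
integers, the `s` series `Σ_{d≥1} d^{j−1} t^d` are linearly independent, hence so are the `s`
polynomials. They lie in `{Q : Q(0) = 0, deg Q ≤ s} = t·ℚ[t]_{<s}`, which has dimension `s`, so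
they form a basis of it.
-/

open Polynomial fwdDiff

theorem LinearIndependent.existsUnique_eq_sum_smul {ι R M : Type*} [Fintype ι] [Semiring R]
    [AddCommMonoid M] [Module R M] {v : ι → M} (hv : LinearIndependent R v) {x : M}
    (hx : x ∈ Submodule.span R (Set.range v)) : ∃! α : ι → R, x = ∑ i, α i • v i := by
  obtain ⟨α, rfl⟩ := (Submodule.mem_span_range_iff_exists_fun R).1 hx
  refine ⟨α, rfl, fun β hβ => ?_⟩
  apply linearIndependent_iff_injective_fintypeLinearCombination.1 hv
  simpa [Fintype.linearCombination_apply] using hβ.symm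

theorem Polynomial.linearIndependent_X_pow (R : Type*) [Semiring R] :
    LinearIndependent R fun n : ℕ => (X ^ n : R[X]) := by
  simpa [coe_basisMonomials, monomial_one_right_eq_X_pow] using (basisMonomials R).linearIndependent

theorem Polynomial.mem_map_mulLeft_X_degreeLT {R : Type*} [CommSemiring R] {n : ℕ} {Q : R[X]} :
    Q ∈ (degreeLT R n).map (LinearMap.mulLeft R X) ↔ Q.coeff 0 = 0 ∧ Q.degree ≤ n := by
  rw [Submodule.mem_map]
  constructor
  · rintro ⟨p, hp, rfl⟩
    rw [mem_degreeLT, degree_lt_iff_coeff_zero] at hp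
    refine ⟨by simp, degree_le_iff_coeff_zero _ _ |>.2 fun m hm => ?_⟩
    obtain ⟨m, rfl⟩ := Nat.exists_eq_add_one_of_ne_zero (n := m) (by rintro rfl; simp at hm)
    rw [LinearMap.mulLeft_apply, coeff_X_mul]
    exact hp m (by exact_mod_cast Nat.lt_succ_iff.1 (by exact_mod_cast hm))
  · rintro ⟨h0, hd⟩
    refine ⟨Q.divX, ?_, by simpa [h0] using X_mul_divX_add Q⟩
    rw [mem_degreeLT, degree_lt_iff_coeff_zero]
    intro m hm
    rw [coeff_divX]
    exact coeff_eq_zero_of_degree_lt (hd.trans_lt (by exact_mod_cast Nat.lt_add_one_of_le hm))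

theorem Polynomial.finrank_map_mulLeft_X_degreeLT {R : Type*} [CommRing R] [Nontrivial R]
    (n : ℕ) : Module.finrank R ((degreeLT R n).map (LinearMap.mulLeft R X)) = n := by
  rw [← (Submodule.equivMapOfInjective _ isRegular_X.left _).finrank_eq,
    Module.finrank_eq_card_basis (degreeLT.basis R n), Fintype.card_fin]

theorem PowerSeries.coeff_one_sub_X_pow_mul {R : Type*} [CommRing R] (φ : PowerSeries R)
    {s n : ℕ} (h : s ≤ n) :
    coeff n ((1 - X) ^ s * φ) = (Δ_[1])^[s] (fun m => coeff m φ) (n - s) := by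
  induction s generalizing n with
  | zero => simp
  | succ s ih =>
    obtain ⟨n, rfl⟩ := Nat.exists_eq_add_of_lt h
    rw [pow_succ', mul_assoc, sub_mul, one_mul, map_sub, coeff_succ_X_mul, ih (by omega),
      ih (by omega), Function.iterate_succ_apply', fwdDiff]
    simp only [add_assoc, Nat.add_sub_cancel_left, Nat.add_sub_add_left, Nat.add_sub_cancel]

section natValueSeries

variable (R : Type*) [CommRing R]

noncomputable def natValueSeries : R[X] →ₗ[R] PowerSeries R where
  toFun q := PowerSeries.mk fun d => if d = 0 then 0 else q.eval (d : R)
  map_add' p q := by ext d; by_cases hd : d = 0 <;> simp [hd]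
  map_smul' c q := by ext d; by_cases hd : d = 0 <;> simp [hd]

variable {R}

theorem coeff_natValueSeries (q : R[X]) (d : ℕ) :
    PowerSeries.coeff d (natValueSeries R q) = if d = 0 then 0 else q.eval (d : R) := by
  simp [natValueSeries]

theorem natValueSeries_injective [IsDomain R] [CharZero R] :
    Function.Injective (natValueSeries R) := by
  refine (injective_iff_map_eq_zero _).2 fun q hq => eq_zero_of_infinite_isRoot q ?_
  refine Set.infinite_of_injective_forall_mem (f := fun n : ℕ => ((n + 1 : ℕ) : R))
    (Nat.cast_injective.comp (add_left_injective 1)) fun n => ?_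
  simpa [coeff_natValueSeries] using congrArg (PowerSeries.coeff (n + 1)) hq

theorem coeff_one_sub_X_pow_mul_natValueSeries_eq_zero {q : R[X]} {s n : ℕ}
    (hq : q.natDegree < s) (hn : s < n) :
    PowerSeries.coeff n ((1 - PowerSeries.X) ^ s * natValueSeries R q) = 0 := by
  have hshift : (Δ_[1])^[s] (fun m => PowerSeries.coeff m (natValueSeries R q)) (n - s) =
      (Δ_[1])^[s] q.eval ((n - s : ℕ) : R) := by
    rw [fwdDiff_iter_eq_sum_shift, fwdDiff_iter_eq_sum_shift]
    refine Finset.sum_congr rfl fun k _ => ?_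
    rw [coeff_natValueSeries, if_neg (by omega)]
    simp
  rw [PowerSeries.coeff_one_sub_X_pow_mul _ hn.le, hshift, fwdDiff_iter_eq_zero_of_degree_lt hq]
  rfl

end natValueSeries

theorem coeff_tEuler_zero (s : ℕ) : (tEuler s).coeff 0 = 0 := by
  simp [tEuler, PowerSeries.coeff_trunc]

theorem natDegree_tEuler_le (s : ℕ) : (tEuler s).natDegree ≤ s :=
  Nat.le_of_lt_add_one (PowerSeries.natDegree_trunc_lt _ s)

theorem X_mul_eulerianPoly (k : ℕ) : X * eulerianPoly k = tEuler (k + 1) := by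
  rw [eulerianPoly]
  simpa [coeff_tEuler_zero] using X_mul_divX_add (tEuler (k + 1))

theorem coe_tEuler_succ (k : ℕ) :
    (tEuler (k + 1) : PowerSeries ℚ) =
      (1 - PowerSeries.X) ^ (k + 1) * natValueSeries ℚ (X ^ k) := by
  have hser : (PowerSeries.mk fun d => if d = 0 then 0 else (d : ℚ) ^ (k + 1 - 1)) =
      natValueSeries ℚ (X ^ k) := by
    ext d; simp [coeff_natValueSeries]
  ext n
  rw [coeff_coe, tEuler, PowerSeries.coeff_trunc, hser]
  split_ifs with hn
  · rfl
  · exact (coeff_one_sub_X_pow_mul_natValueSeries_eq_zero (by simp) (by omega)).symm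

noncomputable def eulerianFamily (s : ℕ) (j : Fin s) : ℚ[X] :=
  X * eulerianPoly j * (1 - X) ^ (s - 1 - j)

theorem coe_eulerianFamily {s : ℕ} (j : Fin s) :
    (eulerianFamily s j : PowerSeries ℚ) =
      (1 - PowerSeries.X) ^ s * natValueSeries ℚ (X ^ (j : ℕ)) := by
  have hsplit : (1 - PowerSeries.X : PowerSeries ℚ) ^ s =
      (1 - PowerSeries.X) ^ ((j : ℕ) + 1) * (1 - PowerSeries.X) ^ (s - 1 - j) := by
    rw [← pow_add]; congr 1; omega
  rw [eulerianFamily, coe_mul, X_mul_eulerianPoly, coe_tEuler_succ, coe_pow, coe_sub, coe_one,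
    coe_X, hsplit]
  ring

theorem linearIndependent_eulerianFamily (s : ℕ) : LinearIndependent ℚ (eulerianFamily s) := by
  have hne : (1 - PowerSeries.X : PowerSeries ℚ) ^ s ≠ 0 :=
    pow_ne_zero _ fun h => by simpa using congrArg PowerSeries.constantCoeff h
  have hinj : Function.Injective ((LinearMap.mulLeft ℚ ((1 - PowerSeries.X) ^ s)).comp
      (natValueSeries ℚ)) :=
    (mul_right_injective₀ hne).comp natValueSeries_injective
  apply LinearIndependent.of_comp (coeToPowerSeries.algHom ℚ).toLinearMap
  have hcomp : (coeToPowerSeries.algHom ℚ).toLinearMap ∘ eulerianFamily s =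
      (LinearMap.mulLeft ℚ ((1 - PowerSeries.X) ^ s)).comp (natValueSeries ℚ) ∘
        fun j : Fin s => X ^ (j : ℕ) := by
    funext j; simp [coe_eulerianFamily]
  rw [hcomp]
  exact ((linearIndependent_X_pow ℚ).comp _ Fin.val_injective).map' _
    (LinearMap.ker_eq_bot.2 hinj)

theorem eulerianFamily_mem (s : ℕ) (j : Fin s) :
    eulerianFamily s j ∈ (degreeLT ℚ s).map (LinearMap.mulLeft ℚ X) := by
  refine mem_map_mulLeft_X_degreeLT.2 ⟨by simp [eulerianFamily], degree_le_of_natDegree_le ?_⟩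
  rw [eulerianFamily, X_mul_eulerianPoly]
  calc _ ≤ (tEuler (j + 1)).natDegree + ((1 - X : ℚ[X]) ^ (s - 1 - j)).natDegree :=
        natDegree_mul_le
    _ ≤ (j + 1) + (s - 1 - j) := by
        gcongr
        · exact natDegree_tEuler_le _
        · compute_degree
    _ = s := by omega

theorem span_eulerianFamily (s : ℕ) :
    Submodule.span ℚ (Set.range (eulerianFamily s)) =
      (degreeLT ℚ s).map (LinearMap.mulLeft ℚ X) := by
  refine Submodule.eq_of_le_of_finrank_le ?_ ?_
  · exact Submodule.span_le.2 (Set.range_subset_iff.2 (eulerianFamily_mem s))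
  · rw [finrank_map_mulLeft_X_degreeLT, finrank_span_eq_card (linearIndependent_eulerianFamily s),
      Fintype.card_fin]

theorem eulerian_basis_general (s : ℕ) :
    LinearIndependent ℚ (fun j : Fin s =>
      (Polynomial.X * eulerianPoly (j : ℕ) * (1 - Polynomial.X) ^ (s - 1 - (j : ℕ)) :
        Polynomial ℚ)) ∧
    (∀ Q : Polynomial ℚ,
      (Q.coeff 0 = 0 ∧ Q.degree ≤ (s : ℕ)) ↔
        Q ∈ Submodule.span ℚ (Set.range fun j : Fin s =>
          (Polynomial.X * eulerianPoly (j : ℕ) * (1 - Polynomial.X) ^ (s - 1 - (j : ℕ)) :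
            Polynomial ℚ))) ∧
    (∀ Q : Polynomial ℚ, Q.coeff 0 = 0 → Q.degree ≤ (s : ℕ) →
      ∃! α : Fin s → ℚ, Q = ∑ j,
        α j • (Polynomial.X * eulerianPoly (j : ℕ) * (1 - Polynomial.X) ^ (s - 1 - (j : ℕ)))) := by
  refine ⟨linearIndependent_eulerianFamily s, fun Q => ?_, fun Q h0 hd => ?_⟩
  · rw [← mem_map_mulLeft_X_degreeLT, ← span_eulerianFamily]
    rfl
  · refine (linearIndependent_eulerianFamily s).existsUnique_eq_sum_smul ?_
    rw [span_eulerianFamily]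
    exact mem_map_mulLeft_X_degreeLT.2 ⟨h0, hd⟩

/-- For s ≥ 1 the polynomials t·P_{j−1}(t)·(1−t)^{s−j}, j = 1,…,s (here indexed by
j : Fin s, corresponding to j+1 ∈ {1,…,s}), form a ℚ-basis of
{ Q ∈ ℚ[t] : Q(0) = 0, deg Q ≤ s }: they are linearly independent, span exactly that
space, and every such Q has a unique representation Q = Σ_j α_j·tP_{j−1}(t)(1−t)^{s−j}. -/
theorem eulerian_basis (s : ℕ) (hs : 1 ≤ s) :
    LinearIndependent ℚ (fun j : Fin s =>
      (Polynomial.X * eulerianPoly (j : ℕ) * (1 - Polynomial.X) ^ (s - 1 - (j : ℕ)) :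
        Polynomial ℚ)) ∧
    (∀ Q : Polynomial ℚ,
      (Q.coeff 0 = 0 ∧ Q.degree ≤ (s : ℕ)) ↔
        Q ∈ Submodule.span ℚ (Set.range fun j : Fin s =>
          (Polynomial.X * eulerianPoly (j : ℕ) * (1 - Polynomial.X) ^ (s - 1 - (j : ℕ)) :
            Polynomial ℚ))) ∧
    (∀ Q : Polynomial ℚ, Q.coeff 0 = 0 → Q.degree ≤ (s : ℕ) →
      ∃! α : Fin s → ℚ, Q = ∑ j,
        α j • (Polynomial.X * eulerianPoly (j : ℕ) * (1 - Polynomial.X) ^ (s - 1 - (j : ℕ)))) :=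
  eulerian_basis_general s
end

section
/- Let m_k = #{ (a,b) ∈ ℕ² : 4a + 6b = k } for k ≥ 0 (so m_k equals the dimension of the space of modular forms of weight k for SL_2(ℤ)). Then one has the identity of formal power series Σ_{k≥0} m_k² x^k = (1 + x^{12}) / ((1−x⁴)(1−x⁶)(1−x^{12})) in ℚ[[x]], i.e. (1−x⁴)(1−x⁶)(1−x^{12}) · Σ_{k≥0} m_k² x^k = 1 + x^{12}. -/
/-- m_k = #{(a,b) ∈ ℕ² : 4a+6b = k} (the dimension of the space of modular forms of
weight k for SL₂(ℤ)). -/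
noncomputable def mDim (k : ℕ) : ℕ := Nat.card {p : ℕ × ℕ // 4 * p.1 + 6 * p.2 = k}

/-- Counting solutions by the value of `b`. -/
def Dcount (k : ℕ) : ℕ :=
  ((Finset.range (k+1)).filter (fun b => 6*b ≤ k ∧ (k - 6*b) % 4 = 0)).card

lemma mDim_eq_D (k : ℕ) : mDim k = Dcount k := by
  rw [mDim, Dcount, ← Nat.card_eq_finsetCard]
  apply Nat.card_congr
  refine
    { toFun := fun p => ⟨p.1.2, ?_⟩
      invFun := fun b => ⟨((k - 6*b.1)/4, b.1), ?_⟩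
      left_inv := ?_
      right_inv := ?_ }
  · have h := p.2
    simp only [Finset.mem_coe, Finset.mem_filter, Finset.mem_range]
    omega
  · have h := b.2
    simp only [Finset.mem_coe, Finset.mem_filter, Finset.mem_range] at h
    omega
  · rintro ⟨⟨a, b⟩, h⟩
    simp only [Subtype.mk.injEq, Prod.mk.injEq]
    exact ⟨by omega, trivial⟩
  · rintro ⟨b, h⟩
    rfl

lemma D_rec (k : ℕ) : Dcount (k+12) = Dcount k + (if k % 2 = 0 then 1 else 0) := by
  classical
  have key : (Finset.range (k+13)).filter (fun b => 6*b ≤ k+12 ∧ (k+12 - 6*b) % 4 = 0)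
      = ((Finset.range (k+1)).filter (fun b => 6*b ≤ k ∧ (k - 6*b) % 4 = 0)).image (· + 2)
        ∪ (Finset.range 2).filter (fun b => 6*b ≤ k+12 ∧ (k+12 - 6*b) % 4 = 0) := by
    ext b
    simp only [Finset.mem_filter, Finset.mem_range, Finset.mem_union, Finset.mem_image]
    constructor
    · intro hb
      by_cases h2 : b < 2
      · exact Or.inr ⟨h2, hb.2⟩
      · exact Or.inl ⟨b - 2, by omega, by omega⟩
    · rintro (⟨c, hc, rfl⟩ | h) <;> omega
  have hdisj : Disjoint
      (((Finset.range (k+1)).filter (fun b => 6*b ≤ k ∧ (k - 6*b) % 4 = 0)).image (· + 2))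
      ((Finset.range 2).filter (fun b => 6*b ≤ k+12 ∧ (k+12 - 6*b) % 4 = 0)) := by
    rw [Finset.disjoint_left]
    rintro b hb hb'
    simp only [Finset.mem_image, Finset.mem_filter, Finset.mem_range] at hb hb'
    omega
  have hsmall : ((Finset.range 2).filter
      (fun b => 6*b ≤ k+12 ∧ (k+12 - 6*b) % 4 = 0)).card = if k % 2 = 0 then 1 else 0 := by
    have h4 : k % 4 = 0 ∨ k % 4 = 1 ∨ k % 4 = 2 ∨ k % 4 = 3 := by omega
    rcases h4 with h | h | h | h
    · rw [show ((Finset.range 2).filter (fun b => 6*b ≤ k+12 ∧ (k+12 - 6*b) % 4 = 0))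
          = {0} from by ext b; simp only [Finset.mem_filter, Finset.mem_range,
            Finset.mem_singleton]; omega]
      rw [if_pos (show k % 2 = 0 by omega)]
      rfl
    · rw [show ((Finset.range 2).filter (fun b => 6*b ≤ k+12 ∧ (k+12 - 6*b) % 4 = 0))
          = ∅ from by ext b; simp only [Finset.mem_filter, Finset.mem_range,
            Finset.notMem_empty, iff_false]; omega]
      rw [if_neg (show ¬ k % 2 = 0 by omega)]
      rfl
    · rw [show ((Finset.range 2).filter (fun b => 6*b ≤ k+12 ∧ (k+12 - 6*b) % 4 = 0))
          = {1} from by ext b; simp only [Finset.mem_filter, Finset.mem_range,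
            Finset.mem_singleton]; omega]
      rw [if_pos (show k % 2 = 0 by omega)]
      rfl
    · rw [show ((Finset.range 2).filter (fun b => 6*b ≤ k+12 ∧ (k+12 - 6*b) % 4 = 0))
          = ∅ from by ext b; simp only [Finset.mem_filter, Finset.mem_range,
            Finset.notMem_empty, iff_false]; omega]
      rw [if_neg (show ¬ k % 2 = 0 by omega)]
      rfl
  have : Dcount (k+12) = ((Finset.range (k+13)).filter
      (fun b => 6*b ≤ k+12 ∧ (k+12 - 6*b) % 4 = 0)).card := by
    rw [Dcount]
  rw [this, key, Finset.card_union_of_disjoint hdisj,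
    Finset.card_image_of_injective _ (add_left_injective 2), hsmall, Dcount]

lemma mDim_formula (k : ℕ) :
    mDim k = if k % 2 = 1 then 0 else k/12 + (if k % 12 = 2 then 0 else 1) := by
  induction k using Nat.strong_induction_on with
  | _ k ih =>
    by_cases hk : k < 12
    · interval_cases k <;> rw [mDim_eq_D] <;> decide
    · obtain ⟨j, rfl⟩ : ∃ j, k = j + 12 := ⟨k - 12, by omega⟩
      have h1 : mDim (j+12) = mDim j + (if j % 2 = 0 then 1 else 0) := by
        rw [mDim_eq_D, mDim_eq_D]; exact D_rec j
      rw [h1, ih j (by omega)]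
      split_ifs <;> omega

lemma R1 (k : ℕ) : mDim (k+12) = mDim k + (if k % 2 = 0 then 1 else 0) := by
  rw [mDim_eq_D, mDim_eq_D]; exact D_rec k

lemma R2 (k : ℕ) : mDim (k+10) + mDim k = mDim (k+6) + mDim (k+4) := by
  simp only [mDim_formula]
  split_ifs <;> omega

/-- Σ_{k≥0} m_k² x^k = (1+x^{12})/((1−x⁴)(1−x⁶)(1−x^{12})), as formal power series, i.e.
(1−x⁴)(1−x⁶)(1−x^{12})·Σ_{k≥0} m_k² x^k = 1+x^{12}. -/
theorem modular_dim_sq_generating_series :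
    (1 - PowerSeries.X ^ 4) * (1 - PowerSeries.X ^ 6) * (1 - PowerSeries.X ^ 12) *
        PowerSeries.mk (fun k => (mDim k : ℚ) ^ 2) =
      1 + PowerSeries.X ^ 12 := by
  set M : PowerSeries ℚ := PowerSeries.mk (fun k => (mDim k : ℚ) ^ 2) with hM
  have expand : (1 - PowerSeries.X ^ 4) * (1 - PowerSeries.X ^ 6) *
      (1 - PowerSeries.X ^ 12) * M
      = M - M * PowerSeries.X^4 - M * PowerSeries.X^6 + M * PowerSeries.X^10
        - M * PowerSeries.X^12 + M * PowerSeries.X^16 + M * PowerSeries.X^18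
        - M * PowerSeries.X^22 := by ring
  rw [expand]
  ext n
  simp only [map_sub, map_add, PowerSeries.coeff_mul_X_pow', PowerSeries.coeff_mk,
    PowerSeries.coeff_one, PowerSeries.coeff_X_pow, hM]
  by_cases hn : n < 22
  · interval_cases n <;> norm_num [mDim_formula]
  · rw [if_pos (show 4 ≤ n by omega), if_pos (show 6 ≤ n by omega),
      if_pos (show 10 ≤ n by omega), if_pos (show 12 ≤ n by omega),
      if_pos (show 16 ≤ n by omega), if_pos (show 18 ≤ n by omega),
      if_pos (show 22 ≤ n by omega), if_neg (show ¬ n = 0 by omega),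
      if_neg (show ¬ n = 12 by omega)]
    obtain ⟨k, rfl⟩ : ∃ k, n = k + 22 := ⟨n - 22, by omega⟩
    rw [show k + 22 - 4 = k + 18 from by omega, show k + 22 - 6 = k + 16 from by omega,
      show k + 22 - 10 = k + 12 from by omega, show k + 22 - 12 = k + 10 from by omega,
      show k + 22 - 16 = k + 6 from by omega, show k + 22 - 18 = k + 4 from by omega,
      show k + 22 - 22 = k from by omega]
    have e1 := R1 (k+10)
    have e2 := R1 (k+6)
    have e3 := R1 (k+4)
    have e4 := R1 k
    rw [show k + 10 + 12 = k + 22 from by omega] at e1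
    rw [show k + 6 + 12 = k + 18 from by omega] at e2
    rw [show k + 4 + 12 = k + 16 from by omega] at e3
    rw [show (k+10) % 2 = k % 2 from by omega] at e1
    rw [show (k+6) % 2 = k % 2 from by omega] at e2
    rw [show (k+4) % 2 = k % 2 from by omega] at e3
    rw [e1, e2, e3, e4]
    have h2 : (mDim (k+10) : ℚ) + mDim k = mDim (k+6) + mDim (k+4) := by
      exact_mod_cast R2 k
    by_cases hk : k % 2 = 0
    · simp only [if_pos hk]
      push_cast
      linear_combination 2 * h2
    · simp only [if_neg hk]
      push_cast
      ring
end
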